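/- arXiv:2107.12785 — 9 statements merged into one kernel-verified Lean document; each statement's English description precedes it below -/
import Mathlib

section
/- Consider the COVID-19 model ODE system. Suppose all parameters are positive, the solution (S,E,I_u,I_n,I_h,R,V) is defined and differentiable on [0,∞) with N(t) = S(t)+E(t)+I_u(t)+I_n(t)+I_h(t)+R(t) > 0 for all t ≥ 0, and the initial conditions satisfy S(0) > 0 and E(0), I_u(0), I_n(0), I_h(0), R(0), V(0) ≥ 0. Then for every t ≥ 0 one has S(t) > 0 and E(t), I_u(t), I_n(t), I_h(t), R(t), V(t) ≥ 0; that is, the nonnegative orthant is invariant under the flow and S remains positive for all time. -/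
/-!
Along a trajectory the vector field is quasi-positive: when a compartment is the smallest one and
is nonpositive, its derivative is bounded below by a fixed multiple of its value. Diagonal terms
never matter and the other linear terms enter with nonnegative coefficients; the bilinear incidence
`β₁ S (I_u + ν I_n) / N + β₂ S V` is controlled because the trajectory and `1 / N` are bounded on
the compact interval `[0, t]`. At the first time some component of `x + ε e^{(M+1)t}` vanishes,
that component would have positive derivative, so no such time exists; letting `ε → 0` gives
invariance of the orthant. Once `R ≥ 0` is known, `S' ≥ -K S`, and Grönwall's inequality gives
`S(t) ≥ S(0) e^{-Kt} > 0`.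
-/

open Set Filter Topology Real

lemma HasDerivAt.nonpos_of_pos_Ico {g : ℝ → ℝ} {d a T : ℝ} (hg : HasDerivAt g d T) (haT : a < T)
    (hpos : ∀ s ∈ Ico a T, 0 < g s) (hT : g T ≤ 0) : d ≤ 0 := by
  have hslope := (hasDerivWithinAt_iff_tendsto_slope' self_notMem_Iio).1
    (hg.hasDerivWithinAt (s := Iio T))
  refine le_of_tendsto hslope ?_
  filter_upwards [Ico_mem_nhdsLT haT] with s hs
  rw [slope_def_field]
  exact div_nonpos_of_nonneg_of_nonpos (by linarith [hpos s hs]) (by linarith [hs.2])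

lemma ContinuousAt.nonneg_of_pos_Ico {g : ℝ → ℝ} {a T : ℝ} (hg : ContinuousAt g T) (haT : a < T)
    (hpos : ∀ s ∈ Ico a T, 0 < g s) : 0 ≤ g T :=
  ge_of_tendsto (hg.tendsto.mono_left nhdsWithin_le_nhds) <|
    eventually_of_mem (Ico_mem_nhdsLT haT) fun s hs => (hpos s hs).le

/-- A quantitative form of quasi-positivity along a trajectory: a component that is the smallest
and nonpositive can decrease at most at an exponential rate. -/
def QuasiPositiveOn {ι : Type*} (x : ι → ℝ → ℝ) (s : Set ℝ) : Prop :=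
  ∀ i, ∃ M, ∀ t ∈ s, x i t ≤ 0 → (∀ j, x i t ≤ x j t) → M * x i t ≤ deriv (x i) t

namespace QuasiPositiveOn

variable {ι : Type*} [Finite ι] {x : ι → ℝ → ℝ}

lemma exists_uniform {s : Set ℝ} (h : QuasiPositiveOn x s) :
    ∃ M, ∀ i, ∀ t ∈ s, x i t ≤ 0 → (∀ j, x i t ≤ x j t) → M * x i t ≤ deriv (x i) t := by
  choose M hM using h
  obtain ⟨L, hL⟩ := (finite_range M).bddAbove
  exact ⟨L, fun i t ht hneg hmin =>
    (mul_le_mul_of_nonpos_right (hL ⟨i, rfl⟩) hneg).trans (hM i t ht hneg hmin)⟩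

lemma pos_add_exp {a b M ε : ℝ} (hx : ∀ i, ∀ t ∈ Icc a b, DifferentiableAt ℝ (x i) t)
    (hM : ∀ i, ∀ t ∈ Icc a b, x i t ≤ 0 → (∀ j, x i t ≤ x j t) → M * x i t ≤ deriv (x i) t)
    (ha : ∀ i, 0 ≤ x i a) (hε : 0 < ε) :
    ∀ t ∈ Icc a b, ∀ i, 0 < x i t + ε * exp ((M + 1) * (t - a)) := by
  set φ : ℝ → ℝ := fun t => ε * exp ((M + 1) * (t - a))
  have hφ : ∀ t, HasDerivAt φ ((M + 1) * φ t) t := fun t =>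
    ((((hasDerivAt_id t).sub_const a).const_mul (M + 1)).exp.const_mul ε).congr_deriv
      (by simp only [φ, id]; ring)
  have hφpos : ∀ t, 0 < φ t := fun t => by positivity
  have hy : ∀ i, ∀ t ∈ Icc a b,
      HasDerivAt (fun t => x i t + φ t) (deriv (x i) t + (M + 1) * φ t) t :=
    fun i t ht => (hx i t ht).hasDerivAt.add (hφ t)
  by_contra! hbad
  set K := {t ∈ Icc a b | ∃ i, x i t + φ t ≤ 0}
  have hKclosed : IsClosed K := by
    have : K = ⋃ i, Icc a b ∩ (fun t => x i t + φ t) ⁻¹' Iic 0 := by ext; simp [K]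
    rw [this]
    exact isClosed_iUnion_of_finite fun i => ContinuousOn.preimage_isClosed_of_isClosed
      (fun t ht => (hy i t ht).continuousAt.continuousWithinAt) isClosed_Icc isClosed_Iic
  obtain ⟨T, ⟨hT, i₀, hi₀⟩, hTleast⟩ :=
    (isCompact_Icc.of_isClosed_subset hKclosed fun t ht => ht.1).exists_isLeast hbad
  have hbefore : ∀ i, ∀ s ∈ Ico a T, 0 < x i s + φ s := fun i s hs => by
    by_contra! h
    exact (hTleast ⟨⟨hs.1, hs.2.le.trans hT.2⟩, i, h⟩).not_gt hs.2
  have haT : a < T := hT.1.lt_of_ne fun h => by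
    subst h
    linarith [ha i₀, hφpos a]
  have : Nonempty ι := ⟨i₀⟩
  obtain ⟨i, hi⟩ := Finite.exists_min fun j => x j T
  have hyi : x i T + φ T = 0 := le_antisymm (by linarith [hi i₀])
    ((hy i T hT).continuousAt.nonneg_of_pos_Ico haT (hbefore i))
  have hderiv := (hy i T hT).nonpos_of_pos_Ico haT (hbefore i) hyi.le
  have hxi : x i T = -φ T := by linarith
  have hbound := hM i T hT (by linarith [hφpos T]) hi
  rw [hxi] at hbound
  linarith [hφpos T]

theorem nonneg {a b : ℝ} (h : QuasiPositiveOn x (Icc a b))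
    (hx : ∀ i, ∀ t ∈ Icc a b, DifferentiableAt ℝ (x i) t) (ha : ∀ i, 0 ≤ x i a) :
    ∀ t ∈ Icc a b, ∀ i, 0 ≤ x i t := by
  obtain ⟨M, hM⟩ := h.exists_uniform
  intro t ht i
  refine le_of_forall_pos_lt_add fun δ hδ => ?_
  have := pos_add_exp hx hM ha (div_pos hδ (exp_pos ((M + 1) * (t - a)))) t ht i
  rwa [div_mul_cancel₀ _ (exp_pos _).ne'] at this

end QuasiPositiveOn

theorem mul_exp_le_of_neg_mul_le_deriv {f f' : ℝ → ℝ} {a b K : ℝ}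
    (hf : ∀ t ∈ Icc a b, HasDerivAt f (f' t) t) (hK : ∀ t ∈ Ico a b, -K * f t ≤ f' t) :
    ∀ t ∈ Icc a b, f a * exp (-K * (t - a)) ≤ f t := by
  intro t ht
  have := le_gronwallBound_of_liminf_deriv_right_le (f := fun t => -f t) (f' := fun t => -f' t)
    (δ := -f a) (K := -K) (ε := 0) (fun t ht => (hf t ht).continuousAt.neg.continuousWithinAt)
    (fun t ht _ hr => (hf t (Ico_subset_Icc_self ht)).neg.hasDerivWithinAt.liminf_right_slope_le hr)
    le_rfl (fun t ht => by linarith [hK t ht]) t ht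
  rw [gronwallBound_ε0] at this
  linarith

lemma exists_abs_le_of_continuousOn {ι : Type*} [Fintype ι] {f : ι → ℝ → ℝ} {s : Set ℝ}
    (hs : IsCompact s) (hf : ∀ i, ContinuousOn (f i) s) : ∃ B, ∀ i, ∀ t ∈ s, |f i t| ≤ B := by
  obtain ⟨B, hB⟩ := hs.exists_bound_of_continuousOn (continuousOn_pi.2 hf)
  exact ⟨B, fun i t ht => (norm_le_pi_norm (fun i => f i t) i).trans (hB t ht)⟩

lemma mul_abs_add_mul_abs_le_mul {m m' a b : ℝ} (hm : m ≤ 0) (hm' : m' ≤ 0) (ha : m ≤ a)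
    (hb : m' ≤ b) : m * |b| + m' * |a| ≤ a * b := by
  rcases le_total 0 a with ha₀ | ha₀ <;> rcases le_total 0 b with hb₀ | hb₀ <;>
    simp only [abs_of_nonneg, abs_of_nonpos, ha₀, hb₀] <;> nlinarith

lemma abs_add_mul_le {x y c B : ℝ} (hc : 0 ≤ c) (hx : |x| ≤ B) (hy : |y| ≤ B) :
    |x + c * y| ≤ (1 + c) * B :=
  calc |x + c * y| ≤ |x| + c * |y| := by
        simpa [abs_mul, abs_of_nonneg hc] using abs_add_le x (c * y)
    _ ≤ (1 + c) * B := by nlinarith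

section Covid

variable {Pi b1 b2 nu th mu ga p eu en su sn sh dn dh au an mc : ℝ} {S E Iu In Ih R V N : ℝ → ℝ}

lemma abs_covid_lossRate_le {i₁ i₂ v n B : ℝ} (hb1 : 0 ≤ b1) (hb2 : 0 ≤ b2) (hnu : 0 ≤ nu)
    (hn : 0 < n) (hi₁ : |i₁| ≤ B) (hi₂ : |i₂| ≤ B) (hv : |v| ≤ B) (hnB : n⁻¹ ≤ B) :
    |b1 * (i₁ + nu * i₂) / n + b2 * v + mu| ≤ b1 * ((1 + nu) * B) * B + b2 * B + |mu| := by
  have hY := abs_add_mul_le hnu hi₁ hi₂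
  have hfrac : |b1 * (i₁ + nu * i₂) / n| ≤ b1 * ((1 + nu) * B) * B := by
    have hB : 0 ≤ B := (abs_nonneg _).trans hi₁
    rw [abs_div, abs_mul, abs_of_nonneg hb1, abs_of_pos hn, div_eq_mul_inv]
    gcongr
  calc _ ≤ |b1 * (i₁ + nu * i₂) / n| + |b2 * v| + |mu| := abs_add_three _ _ _
    _ ≤ _ := by
      rw [abs_mul, abs_of_nonneg hb2]
      gcongr

lemma le_covid_incidence {m s i₁ i₂ v n B : ℝ} (hb1 : 0 ≤ b1) (hb2 : 0 ≤ b2) (hnu : 0 ≤ nu)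
    (hm : m ≤ 0) (hs : m ≤ s) (hi₁ : m ≤ i₁) (hi₂ : m ≤ i₂) (hv : m ≤ v) (hsB : |s| ≤ B)
    (hi₁B : |i₁| ≤ B) (hi₂B : |i₂| ≤ B) (hvB : |v| ≤ B) (hn : 0 < n) (hnB : n⁻¹ ≤ B) :
    (2 * (1 + nu) * b1 * B * B + 2 * b2 * B) * m ≤ b1 * s * (i₁ + nu * i₂) / n + b2 * s * v := by
  have hY := abs_add_mul_le hnu hi₁B hi₂B
  have hB : 0 ≤ B := (abs_nonneg _).trans hsB
  have hm' : (1 + nu) * m ≤ 0 := mul_nonpos_of_nonneg_of_nonpos (by positivity) hm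
  have hsY : 2 * (1 + nu) * B * m ≤ s * (i₁ + nu * i₂) := by
    have := mul_abs_add_mul_abs_le_mul (b := i₁ + nu * i₂) hm hm' hs (by nlinarith)
    nlinarith [mul_le_mul_of_nonpos_left hY hm, mul_le_mul_of_nonpos_left hsB hm']
  have hsv : 2 * B * m ≤ s * v := by
    have := mul_abs_add_mul_abs_le_mul hm hm hs hv
    nlinarith [mul_le_mul_of_nonpos_left hvB hm, mul_le_mul_of_nonpos_left hsB hm]
  have hb1n : 0 ≤ b1 * n⁻¹ := by positivity
  have h1 : b1 * B * (2 * (1 + nu) * B * m) ≤ b1 * n⁻¹ * (s * (i₁ + nu * i₂)) := by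
    calc _ ≤ b1 * n⁻¹ * (2 * (1 + nu) * B * m) :=
          mul_le_mul_of_nonpos_right (by gcongr)
            (mul_nonpos_of_nonneg_of_nonpos (by positivity) hm)
      _ ≤ _ := mul_le_mul_of_nonneg_left hsY hb1n
  have h2 := mul_le_mul_of_nonneg_left hsv hb2
  rw [div_eq_mul_inv]
  nlinarith

lemma covid_exists_abs_le {t : ℝ} (hN : ∀ t, N t = S t + E t + Iu t + In t + Ih t + R t)
    (hNpos : ∀ t ≥ (0 : ℝ), 0 < N t)
    (hX : ∀ i, ∀ s ∈ Icc 0 t, DifferentiableAt ℝ (![S, E, Iu, In, Ih, R, V] i) s) :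
    ∃ B, ∀ s ∈ Icc 0 t, |S s| ≤ B ∧ |Iu s| ≤ B ∧ |In s| ≤ B ∧ |V s| ≤ B ∧ (N s)⁻¹ ≤ B := by
  have hc : ∀ i, ContinuousOn (![S, E, Iu, In, Ih, R, V] i) (Icc 0 t) :=
    fun i s hs => (hX i s hs).continuousAt.continuousWithinAt
  have hNc : ContinuousOn N (Icc 0 t) :=
    (((((hc 0).add (hc 1)).add (hc 2)).add (hc 3)).add (hc 4)).add (hc 5) |>.congr
      fun s _ => hN s
  obtain ⟨B, hB⟩ := exists_abs_le_of_continuousOn isCompact_Icc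
    (f := ![S, Iu, In, V, fun s => (N s)⁻¹]) fun i => by
      fin_cases i
      exacts [hc 0, hc 2, hc 3, hc 6, hNc.inv₀ fun s hs => (hNpos s hs.1).ne']
  exact ⟨B, fun s hs => ⟨hB 0 s hs, hB 1 s hs, hB 2 s hs, hB 3 s hs,
    (le_abs_self _).trans (hB 4 s hs)⟩⟩

lemma covid_quasiPositiveOn {t B : ℝ} (hPi : 0 ≤ Pi) (hb1 : 0 ≤ b1) (hb2 : 0 ≤ b2)
    (hnu : 0 ≤ nu) (hth : 0 ≤ th) (hga : 0 ≤ ga) (hp : 0 ≤ p) (hp1 : p ≤ 1) (heu : 0 ≤ eu)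
    (hen : 0 ≤ en) (hsu : 0 ≤ su) (hsn : 0 ≤ sn) (hsh : 0 ≤ sh) (hau : 0 ≤ au) (han : 0 ≤ an)
    (hNpos : ∀ t ≥ (0 : ℝ), 0 < N t)
    (hB : ∀ s ∈ Icc 0 t, |S s| ≤ B ∧ |Iu s| ≤ B ∧ |In s| ≤ B ∧ |V s| ≤ B ∧ (N s)⁻¹ ≤ B)
    (hS : ∀ t ≥ (0 : ℝ), HasDerivAt S
      (Pi - b1 * S t * (Iu t + nu * In t) / N t - b2 * S t * V t - mu * S t + th * R t) t)
    (hE : ∀ t ≥ (0 : ℝ), HasDerivAt E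
      (b1 * S t * (Iu t + nu * In t) / N t + b2 * S t * V t - (ga + mu) * E t) t)
    (hIu : ∀ t ≥ (0 : ℝ), HasDerivAt Iu ((1 - p) * ga * E t - (eu + su + mu) * Iu t) t)
    (hIn : ∀ t ≥ (0 : ℝ), HasDerivAt In (p * ga * E t - (en + sn + mu + dn) * In t) t)
    (hIh : ∀ t ≥ (0 : ℝ), HasDerivAt Ih (eu * Iu t + en * In t - (sh + mu + dh) * Ih t) t)
    (hR : ∀ t ≥ (0 : ℝ), HasDerivAt R (su * Iu t + sn * In t + sh * Ih t - (th + mu) * R t) t)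
    (hV : ∀ t ≥ (0 : ℝ), HasDerivAt V (au * Iu t + an * In t - mc * V t) t) :
    QuasiPositiveOn ![S, E, Iu, In, Ih, R, V] (Icc 0 t) := by
  simp only [QuasiPositiveOn, Fin.forall_fin_succ, IsEmpty.forall_iff, Matrix.cons_val_zero,
    Matrix.cons_val_succ, and_true, le_refl, true_and]
  refine ⟨⟨b1 * ((1 + nu) * B) * B + b2 * B + |mu| + th, fun s hs hm hmin => ?_⟩,
    ⟨2 * (1 + nu) * b1 * B * B + 2 * b2 * B + |ga + mu|, fun s hs hm hmin => ?_⟩,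
    ⟨(1 - p) * ga + |eu + su + mu|, fun s hs hm hmin => ?_⟩,
    ⟨p * ga + |en + sn + mu + dn|, fun s hs hm hmin => ?_⟩,
    ⟨eu + en + |sh + mu + dh|, fun s hs hm hmin => ?_⟩,
    ⟨su + sn + sh + |th + mu|, fun s hs hm hmin => ?_⟩,
    ⟨au + an + |mc|, fun s hs hm hmin => ?_⟩⟩
  all_goals obtain ⟨hSB, hIuB, hInB, hVB, hNB⟩ := hB s hs
  · obtain ⟨-, -, -, -, hR', -⟩ := hmin
    have hk := abs_covid_lossRate_le (mu := mu) hb1 hb2 hnu (hNpos s hs.1) hIuB hInB hVB hNB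
    rw [(hS s hs.1).deriv]
    linear_combination mul_le_mul_of_nonpos_right ((neg_le_abs _).trans hk) hm +
      mul_le_mul_of_nonneg_left hR' hth + hPi
  · obtain ⟨hS', hIu', hIn', -, -, hV'⟩ := hmin
    rw [(hE s hs.1).deriv]
    linear_combination le_covid_incidence hb1 hb2 hnu hm hS' hIu' hIn' hV' hSB hIuB hInB hVB
      (hNpos s hs.1) hNB + mul_le_mul_of_nonpos_right (neg_le_abs (ga + mu)) hm
  · obtain ⟨-, hE', -, -, -, -⟩ := hmin
    rw [(hIu s hs.1).deriv]
    linear_combination mul_le_mul_of_nonneg_left hE' (mul_nonneg (sub_nonneg.2 hp1) hga) +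
      mul_le_mul_of_nonpos_right (neg_le_abs (eu + su + mu)) hm
  · obtain ⟨-, hE', -, -, -, -⟩ := hmin
    rw [(hIn s hs.1).deriv]
    linear_combination mul_le_mul_of_nonneg_left hE' (mul_nonneg hp hga) +
      mul_le_mul_of_nonpos_right (neg_le_abs (en + sn + mu + dn)) hm
  · obtain ⟨-, -, hIu', hIn', -, -⟩ := hmin
    rw [(hIh s hs.1).deriv]
    linear_combination mul_le_mul_of_nonneg_left hIu' heu + mul_le_mul_of_nonneg_left hIn' hen +
      mul_le_mul_of_nonpos_right (neg_le_abs (sh + mu + dh)) hm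
  · obtain ⟨-, -, hIu', hIn', hIh', -⟩ := hmin
    rw [(hR s hs.1).deriv]
    linear_combination mul_le_mul_of_nonneg_left hIu' hsu + mul_le_mul_of_nonneg_left hIn' hsn +
      mul_le_mul_of_nonneg_left hIh' hsh + mul_le_mul_of_nonpos_right (neg_le_abs (th + mu)) hm
  · obtain ⟨-, -, hIu', hIn', -, -⟩ := hmin
    rw [(hV s hs.1).deriv]
    linear_combination mul_le_mul_of_nonneg_left hIu' hau + mul_le_mul_of_nonneg_left hIn' han +
      mul_le_mul_of_nonpos_right (neg_le_abs mc) hm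

lemma covid_susceptible_pos {t B : ℝ} (ht : 0 ≤ t) (hPi : 0 ≤ Pi) (hb1 : 0 ≤ b1) (hb2 : 0 ≤ b2)
    (hnu : 0 ≤ nu) (hth : 0 ≤ th) (hNpos : ∀ t ≥ (0 : ℝ), 0 < N t)
    (hB : ∀ s ∈ Icc 0 t, |S s| ≤ B ∧ |Iu s| ≤ B ∧ |In s| ≤ B ∧ |V s| ≤ B ∧ (N s)⁻¹ ≤ B)
    (hS : ∀ t ≥ (0 : ℝ), HasDerivAt S
      (Pi - b1 * S t * (Iu t + nu * In t) / N t - b2 * S t * V t - mu * S t + th * R t) t)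
    (hSR : ∀ s ∈ Icc 0 t, 0 ≤ S s ∧ 0 ≤ R s) (hS0 : 0 < S 0) : 0 < S t := by
  refine (mul_pos hS0 (exp_pos _)).trans_le <| mul_exp_le_of_neg_mul_le_deriv
    (K := b1 * ((1 + nu) * B) * B + b2 * B + |mu|) (fun s hs => hS s hs.1) (fun s hs => ?_) t
    ⟨ht, le_rfl⟩
  obtain ⟨-, hIuB, hInB, hVB, hNB⟩ := hB s (Ico_subset_Icc_self hs)
  obtain ⟨hSs, hRs⟩ := hSR s (Ico_subset_Icc_self hs)
  have hk := abs_covid_lossRate_le (mu := mu) hb1 hb2 hnu (hNpos s hs.1) hIuB hInB hVB hNB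
  linear_combination mul_le_mul_of_nonneg_right ((le_abs_self _).trans hk) hSs +
    mul_nonneg hth hRs + hPi

end Covid

theorem covid_nonneg_orthant_invariant_general
    (Pi b1 b2 nu th mu ga p eu en su sn sh dn dh au an mc : ℝ)
    (hPi : 0 < Pi) (hb1 : 0 < b1) (hb2 : 0 < b2) (hnu : 0 < nu)
    (hth : 0 < th) (hga : 0 < ga) (hp : 0 < p) (hp1 : p < 1)
    (heu : 0 < eu) (hen : 0 < en) (hsu : 0 < su) (hsn : 0 < sn) (hsh : 0 < sh)
    (hau : 0 < au) (han : 0 < an)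
    (S E Iu In Ih R V N : ℝ → ℝ)
    (hN : ∀ t, N t = S t + E t + Iu t + In t + Ih t + R t)
    (hNpos : ∀ t ≥ (0 : ℝ), 0 < N t)
    (hS : ∀ t ≥ (0 : ℝ), HasDerivAt S
      (Pi - b1 * S t * (Iu t + nu * In t) / N t - b2 * S t * V t - mu * S t + th * R t) t)
    (hE : ∀ t ≥ (0 : ℝ), HasDerivAt E
      (b1 * S t * (Iu t + nu * In t) / N t + b2 * S t * V t - (ga + mu) * E t) t)
    (hIu : ∀ t ≥ (0 : ℝ), HasDerivAt Iu ((1 - p) * ga * E t - (eu + su + mu) * Iu t) t)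
    (hIn : ∀ t ≥ (0 : ℝ), HasDerivAt In (p * ga * E t - (en + sn + mu + dn) * In t) t)
    (hIh : ∀ t ≥ (0 : ℝ), HasDerivAt Ih (eu * Iu t + en * In t - (sh + mu + dh) * Ih t) t)
    (hR : ∀ t ≥ (0 : ℝ), HasDerivAt R (su * Iu t + sn * In t + sh * Ih t - (th + mu) * R t) t)
    (hV : ∀ t ≥ (0 : ℝ), HasDerivAt V (au * Iu t + an * In t - mc * V t) t)
    (hS0 : 0 < S 0) (hE0 : 0 ≤ E 0) (hIu0 : 0 ≤ Iu 0) (hIn0 : 0 ≤ In 0)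
    (hIh0 : 0 ≤ Ih 0) (hR0 : 0 ≤ R 0) (hV0 : 0 ≤ V 0) :
    ∀ t ≥ (0 : ℝ), 0 < S t ∧ 0 ≤ E t ∧ 0 ≤ Iu t ∧ 0 ≤ In t ∧ 0 ≤ Ih t ∧ 0 ≤ R t ∧ 0 ≤ V t := by
  intro t ht
  have hX : ∀ i, ∀ s ∈ Icc 0 t, DifferentiableAt ℝ (![S, E, Iu, In, Ih, R, V] i) s := by
    intro i s hs
    fin_cases i
    exacts [(hS s hs.1).differentiableAt, (hE s hs.1).differentiableAt,
      (hIu s hs.1).differentiableAt, (hIn s hs.1).differentiableAt,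
      (hIh s hs.1).differentiableAt, (hR s hs.1).differentiableAt, (hV s hs.1).differentiableAt]
  obtain ⟨B, hB⟩ := covid_exists_abs_le hN hNpos hX
  have hnonneg := (covid_quasiPositiveOn hPi.le hb1.le hb2.le hnu.le hth.le hga.le hp.le hp1.le
    heu.le hen.le hsu.le hsn.le hsh.le hau.le han.le hNpos hB hS hE hIu hIn hIh hR hV).nonneg hX
    (by simp [Fin.forall_fin_succ, hS0.le, hE0, hIu0, hIn0, hIh0, hR0, hV0])
  have hSpos := covid_susceptible_pos ht hPi.le hb1.le hb2.le hnu.le hth.le hNpos hB hS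
    (fun s hs => ⟨hnonneg s hs 0, hnonneg s hs 5⟩) hS0
  have ht' : t ∈ Icc 0 t := ⟨ht, le_rfl⟩
  exact ⟨hSpos, hnonneg t ht' 1, hnonneg t ht' 2, hnonneg t ht' 3, hnonneg t ht' 4,
    hnonneg t ht' 5, hnonneg t ht' 6⟩

/-- the nonnegative orthant is invariant under the flow of the
COVID-19 model, and the susceptible compartment `S` stays positive. -/
theorem covid_nonneg_orthant_invariant
    (Pi b1 b2 nu th mu ga p eu en su sn sh dn dh au an mc : ℝ)
    (hPi : 0 < Pi) (hb1 : 0 < b1) (hb2 : 0 < b2) (hnu : 0 < nu) (hnu1 : nu < 1)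
    (hth : 0 < th) (hmu : 0 < mu) (hga : 0 < ga) (hp : 0 < p) (hp1 : p < 1)
    (heu : 0 < eu) (hen : 0 < en) (hsu : 0 < su) (hsn : 0 < sn) (hsh : 0 < sh)
    (hdn : 0 < dn) (hdh : 0 < dh) (hau : 0 < au) (han : 0 < an) (hmc : 0 < mc)
    (S E Iu In Ih R V N : ℝ → ℝ)
    (hN : ∀ t, N t = S t + E t + Iu t + In t + Ih t + R t)
    (hNpos : ∀ t ≥ (0 : ℝ), 0 < N t)
    (hS : ∀ t ≥ (0 : ℝ), HasDerivAt S
      (Pi - b1 * S t * (Iu t + nu * In t) / N t - b2 * S t * V t - mu * S t + th * R t) t)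
    (hE : ∀ t ≥ (0 : ℝ), HasDerivAt E
      (b1 * S t * (Iu t + nu * In t) / N t + b2 * S t * V t - (ga + mu) * E t) t)
    (hIu : ∀ t ≥ (0 : ℝ), HasDerivAt Iu ((1 - p) * ga * E t - (eu + su + mu) * Iu t) t)
    (hIn : ∀ t ≥ (0 : ℝ), HasDerivAt In (p * ga * E t - (en + sn + mu + dn) * In t) t)
    (hIh : ∀ t ≥ (0 : ℝ), HasDerivAt Ih (eu * Iu t + en * In t - (sh + mu + dh) * Ih t) t)
    (hR : ∀ t ≥ (0 : ℝ), HasDerivAt R (su * Iu t + sn * In t + sh * Ih t - (th + mu) * R t) t)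
    (hV : ∀ t ≥ (0 : ℝ), HasDerivAt V (au * Iu t + an * In t - mc * V t) t)
    (hS0 : 0 < S 0) (hE0 : 0 ≤ E 0) (hIu0 : 0 ≤ Iu 0) (hIn0 : 0 ≤ In 0)
    (hIh0 : 0 ≤ Ih 0) (hR0 : 0 ≤ R 0) (hV0 : 0 ≤ V 0) :
    ∀ t ≥ (0 : ℝ), 0 < S t ∧ 0 ≤ E t ∧ 0 ≤ Iu t ∧ 0 ≤ In t ∧ 0 ≤ Ih t ∧ 0 ≤ R t ∧ 0 ≤ V t :=
  covid_nonneg_orthant_invariant_general Pi b1 b2 nu th mu ga p eu en su sn sh dn dh au an mc hPi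
    hb1 hb2 hnu hth hga hp hp1 heu hen hsu hsn hsh hau han S E Iu In Ih R V N hN hNpos hS hE hIu hIn
    hIh hR hV hS0 hE0 hIu0 hIn0 hIh0 hR0 hV0
end

section
/- Consider the COVID-19 model ODE system with all parameters positive. Suppose (S,E,I_u,I_n,I_h,R,V) is a solution defined and differentiable on [0,∞) whose components are all nonnegative for every t ≥ 0 and with N(t) = S(t)+E(t)+I_u(t)+I_n(t)+I_h(t)+R(t) > 0 for all t ≥ 0. Then the total population N satisfies limsup_{t→∞} N(t) ≤ Π/μ. -/
/-! The total population obeys `N' = Π - μ N - δ_n I_n - δ_h I_h ≤ Π - μ N`. For any `f` with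
`f' ≤ a - μ f`, the function `(f - a/μ) e^{μt}` is nonincreasing, so
`f t ≤ a/μ + (f 0 - a/μ) e^{-μt}`, and the right-hand side tends to `a/μ`. -/

open Real Set Filter Topology

section LinearDifferentialInequality

variable {f f' : ℝ → ℝ} {a μ : ℝ}

theorem antitoneOn_sub_div_mul_exp (hμ : μ ≠ 0) (hf : ∀ t ≥ 0, HasDerivAt f (f' t) t)
    (hf' : ∀ t ≥ 0, f' t ≤ a - μ * f t) :
    AntitoneOn (fun t => (f t - a / μ) * exp (μ * t)) (Ici 0) := by
  have hderiv : ∀ t ≥ 0, HasDerivAt (fun t => (f t - a / μ) * exp (μ * t))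
      ((f' t - (a - μ * f t)) * exp (μ * t)) t := by
    intro t ht
    have hexp : HasDerivAt (fun t => exp (μ * t)) (exp (μ * t) * μ) t := by
      simpa using ((hasDerivAt_id t).const_mul μ).exp
    refine (((hf t ht).sub_const (a / μ)).mul hexp).congr_deriv ?_
    field_simp
    ring
  refine antitoneOn_of_hasDerivWithinAt_nonpos (convex_Ici 0)
    (fun t ht => (hderiv t ht).continuousAt.continuousWithinAt)
    (fun t ht => (hderiv t (interior_subset ht)).hasDerivWithinAt) (fun t ht => ?_)
  exact mul_nonpos_of_nonpos_of_nonneg (sub_nonpos.2 (hf' t (interior_subset ht))) (exp_pos _).le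

theorem le_div_add_mul_exp_neg_of_hasDerivAt_le (hμ : μ ≠ 0)
    (hf : ∀ t ≥ 0, HasDerivAt f (f' t) t) (hf' : ∀ t ≥ 0, f' t ≤ a - μ * f t) :
    ∀ t ≥ 0, f t ≤ a / μ + (f 0 - a / μ) * exp (-(μ * t)) := by
  intro t ht
  have hmono := antitoneOn_sub_div_mul_exp hμ hf hf' self_mem_Ici ht ht
  simp only [mul_zero, exp_zero, mul_one] at hmono
  have hdiv := (le_div_iff₀ (exp_pos (μ * t))).2 hmono
  rw [exp_neg, ← div_eq_mul_inv]
  linarith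

theorem limsup_le_div_of_hasDerivAt_le (hμ : 0 < μ)
    (hf : ∀ t ≥ 0, HasDerivAt f (f' t) t) (hf' : ∀ t ≥ 0, f' t ≤ a - μ * f t)
    (hbdd : IsBoundedUnder (· ≥ ·) atTop f) :
    limsup f atTop ≤ a / μ := by
  have htend : Tendsto (fun t => a / μ + (f 0 - a / μ) * exp (-(μ * t))) atTop (𝓝 (a / μ)) := by
    have hexp : Tendsto (fun t => exp (-(μ * t))) atTop (𝓝 0) :=
      tendsto_exp_neg_atTop_nhds_zero.comp (tendsto_id.const_mul_atTop hμ)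
    simpa using (hexp.const_mul (f 0 - a / μ)).const_add (a / μ)
  calc limsup f atTop
      ≤ limsup (fun t => a / μ + (f 0 - a / μ) * exp (-(μ * t))) atTop :=
        limsup_le_limsup
          (eventually_atTop.2 ⟨0, le_div_add_mul_exp_neg_of_hasDerivAt_le hμ.ne' hf hf'⟩)
          hbdd.isCoboundedUnder_le htend.isBoundedUnder_le
    _ = a / μ := htend.limsup_eq

end LinearDifferentialInequality

theorem covid_total_population_limsup_general
    (Pi b1 b2 nu th mu ga p eu en su sn sh dn dh : ℝ)
    (hmu : 0 < mu)
    (hdn : 0 < dn) (hdh : 0 < dh)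
    (S E Iu In Ih R V N : ℝ → ℝ)
    (hN : ∀ t, N t = S t + E t + Iu t + In t + Ih t + R t)
    (hnonneg : ∀ t ≥ (0 : ℝ), 0 ≤ S t ∧ 0 ≤ E t ∧ 0 ≤ Iu t ∧ 0 ≤ In t ∧ 0 ≤ Ih t ∧
      0 ≤ R t ∧ 0 ≤ V t)
    (hS : ∀ t ≥ (0 : ℝ), HasDerivAt S
      (Pi - b1 * S t * (Iu t + nu * In t) / N t - b2 * S t * V t - mu * S t + th * R t) t)
    (hE : ∀ t ≥ (0 : ℝ), HasDerivAt E
      (b1 * S t * (Iu t + nu * In t) / N t + b2 * S t * V t - (ga + mu) * E t) t)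
    (hIu : ∀ t ≥ (0 : ℝ), HasDerivAt Iu ((1 - p) * ga * E t - (eu + su + mu) * Iu t) t)
    (hIn : ∀ t ≥ (0 : ℝ), HasDerivAt In (p * ga * E t - (en + sn + mu + dn) * In t) t)
    (hIh : ∀ t ≥ (0 : ℝ), HasDerivAt Ih (eu * Iu t + en * In t - (sh + mu + dh) * Ih t) t)
    (hR : ∀ t ≥ (0 : ℝ), HasDerivAt R (su * Iu t + sn * In t + sh * Ih t - (th + mu) * R t) t) :
    Filter.limsup N Filter.atTop ≤ Pi / mu := by
  have hN' : ∀ t ≥ (0 : ℝ), HasDerivAt N (Pi - mu * N t - dn * In t - dh * Ih t) t := by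
    intro t ht
    rw [show N = fun t => S t + E t + Iu t + In t + Ih t + R t from funext hN]
    refine ((((((hS t ht).add (hE t ht)).add (hIu t ht)).add (hIn t ht)).add (hIh t ht)).add
      (hR t ht)).congr_deriv ?_
    rw [hN t]
    ring
  refine limsup_le_div_of_hasDerivAt_le hmu hN' (fun t ht => ?_) ?_
  · obtain ⟨-, -, -, hIn0, hIh0, -⟩ := hnonneg t ht
    linarith [mul_nonneg hdn.le hIn0, mul_nonneg hdh.le hIh0]
  · refine ⟨0, eventually_map.2 (eventually_atTop.2 ⟨0, fun t ht => ?_⟩)⟩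
    obtain ⟨hS0, hE0, hIu0, hIn0, hIh0, hR0, -⟩ := hnonneg t ht
    rw [hN t]
    positivity

/-- for nonnegative solutions of the COVID-19 model, the total
population `N` satisfies `limsup_{t→∞} N(t) ≤ Π/μ`. -/
theorem covid_total_population_limsup
    (Pi b1 b2 nu th mu ga p eu en su sn sh dn dh au an mc : ℝ)
    (hPi : 0 < Pi) (hb1 : 0 < b1) (hb2 : 0 < b2) (hnu : 0 < nu) (hnu1 : nu < 1)
    (hth : 0 < th) (hmu : 0 < mu) (hga : 0 < ga) (hp : 0 < p) (hp1 : p < 1)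
    (heu : 0 < eu) (hen : 0 < en) (hsu : 0 < su) (hsn : 0 < sn) (hsh : 0 < sh)
    (hdn : 0 < dn) (hdh : 0 < dh) (hau : 0 < au) (han : 0 < an) (hmc : 0 < mc)
    (S E Iu In Ih R V N : ℝ → ℝ)
    (hN : ∀ t, N t = S t + E t + Iu t + In t + Ih t + R t)
    (hNpos : ∀ t ≥ (0 : ℝ), 0 < N t)
    (hnonneg : ∀ t ≥ (0 : ℝ), 0 ≤ S t ∧ 0 ≤ E t ∧ 0 ≤ Iu t ∧ 0 ≤ In t ∧ 0 ≤ Ih t ∧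
      0 ≤ R t ∧ 0 ≤ V t)
    (hS : ∀ t ≥ (0 : ℝ), HasDerivAt S
      (Pi - b1 * S t * (Iu t + nu * In t) / N t - b2 * S t * V t - mu * S t + th * R t) t)
    (hE : ∀ t ≥ (0 : ℝ), HasDerivAt E
      (b1 * S t * (Iu t + nu * In t) / N t + b2 * S t * V t - (ga + mu) * E t) t)
    (hIu : ∀ t ≥ (0 : ℝ), HasDerivAt Iu ((1 - p) * ga * E t - (eu + su + mu) * Iu t) t)
    (hIn : ∀ t ≥ (0 : ℝ), HasDerivAt In (p * ga * E t - (en + sn + mu + dn) * In t) t)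
    (hIh : ∀ t ≥ (0 : ℝ), HasDerivAt Ih (eu * Iu t + en * In t - (sh + mu + dh) * Ih t) t)
    (hR : ∀ t ≥ (0 : ℝ), HasDerivAt R (su * Iu t + sn * In t + sh * Ih t - (th + mu) * R t) t)
    (hV : ∀ t ≥ (0 : ℝ), HasDerivAt V (au * Iu t + an * In t - mc * V t) t) :
    Filter.limsup N Filter.atTop ≤ Pi / mu :=
  covid_total_population_limsup_general Pi b1 b2 nu th mu ga p eu en su sn sh dn dh hmu hdn hdh S E
    Iu In Ih R V N hN hnonneg hS hE hIu hIn hIh hR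
end

section
/- Let all model parameters be positive and set φ_u = η_u+σ_u+μ, φ_n = η_n+σ_n+μ+δ_n, φ_h = σ_h+μ+δ_h. Let F and W be the 5×5 real matrices (ordering the coordinates as E, I_u, I_n, I_h, V): F has first row (0, β1, β1·ν, 0, β2·Π/μ) and all other entries zero; W has rows (γ+μ, 0, 0, 0, 0), (−(1−p)·γ, φ_u, 0, 0, 0), (−p·γ, 0, φ_n, 0, 0), (0, −η_u, −η_n, φ_h, 0), (0, −α_u, −α_n, 0, μ_c). Then W is invertible and the spectral radius of the next-generation matrix F·W⁻¹ equals ℛ₀ = (1−p)·γ·β1/(φ_u·(γ+μ)) + p·γ·ν·β1/(φ_n·(γ+μ)) + (1−p)·γ·α_u·β2·(Π/μ)/(μ_c·φ_u·(γ+μ)) + p·γ·α_n·β2·(Π/μ)/(μ_c·φ_n·(γ+μ)). -/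
/-!
The new-infection matrix has rank one: `F = e_E fᵀ`, infections only entering the exposed class.
Hence `F W⁻¹ = e_E (fᵀ W⁻¹)` is again of rank one, and its only possibly nonzero eigenvalue is
`fᵀ W⁻¹ e_E = f ⬝ᵥ x`, where `W x = e_E`. Since `W` is lower triangular, `x` is obtained by
forward substitution, and `f ⬝ᵥ x` is exactly `ℛ₀`.
-/

open Matrix Polynomial

namespace Matrix

variable {n : Type*} [Fintype n] [DecidableEq n]

theorem mem_spectrum_vecMulVec_iff {K : Type*} [Field K] [Nonempty n] (u v : n → K) {r : K} :
    r ∈ spectrum K (vecMulVec u v) ↔ r ^ (Fintype.card n - 1) * (r - u ⬝ᵥ v) = 0 := by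
  obtain ⟨k, hk⟩ := Nat.exists_eq_add_one_of_ne_zero (Fintype.card_ne_zero (α := n))
  rw [mem_spectrum_iff_isRoot_charpoly, charpoly_vecMulVec, IsRoot.def, hk, Nat.add_sub_cancel]
  simp only [eval_sub, eval_smul, eval_pow, eval_X, smul_eq_mul]
  ring_nf

theorem spectralRadius_vecMulVec {𝕜 : Type*} [NormedField 𝕜] [Nonempty n] (u v : n → 𝕜) :
    spectralRadius 𝕜 (vecMulVec u v) = ‖u ⬝ᵥ v‖₊ := by
  refine le_antisymm (iSup₂_le fun r hr => ?_) (le_iSup₂ (f := fun r _ => (‖r‖₊ : ENNReal)) _ ?_)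
  · rw [mem_spectrum_vecMulVec_iff, mul_eq_zero, sub_eq_zero] at hr
    rcases hr with hr | rfl
    · simp [pow_eq_zero_iff'.1 hr |>.1]
    · exact le_rfl
  · simp [mem_spectrum_vecMulVec_iff]

theorem spectralRadius_map_vecMulVec {𝕜 : Type*} [NormedField 𝕜] [NormedAlgebra ℝ 𝕜] [Nonempty n]
    (u v : n → ℝ) :
    spectralRadius 𝕜 ((vecMulVec u v).map (algebraMap ℝ 𝕜)) = ‖u ⬝ᵥ v‖₊ := by
  have hmap : (vecMulVec u v).map (algebraMap ℝ 𝕜) =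
      vecMulVec (algebraMap ℝ 𝕜 ∘ u) (algebraMap ℝ 𝕜 ∘ v) := by
    ext i j
    simp [vecMulVec_apply]
  rw [hmap, spectralRadius_vecMulVec, ← RingHom.map_dotProduct, nnnorm_algebraMap']

theorem dotProduct_vecMul_nonsing_inv {R : Type*} [CommRing R] {W : Matrix n n R}
    (hW : IsUnit W.det) {u x : n → R} (hx : W *ᵥ x = u) (f : n → R) :
    u ⬝ᵥ (f ᵥ* W⁻¹) = f ⬝ᵥ x := by
  rw [← hx, dotProduct_comm, ← dotProduct_mulVec, mulVec_mulVec, nonsing_inv_mul _ hW,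
    one_mulVec]

theorem spectralRadius_map_vecMulVec_mul_nonsing_inv {𝕜 : Type*} [NormedField 𝕜]
    [NormedAlgebra ℝ 𝕜] [Nonempty n] {W : Matrix n n ℝ} (hW : IsUnit W.det) {u x : n → ℝ}
    (hx : W *ᵥ x = u) (f : n → ℝ) :
    spectralRadius 𝕜 ((vecMulVec u f * W⁻¹).map (algebraMap ℝ 𝕜)) = ‖f ⬝ᵥ x‖₊ := by
  rw [vecMulVec_mul, spectralRadius_map_vecMulVec, dotProduct_vecMul_nonsing_inv hW hx]

end Matrix

theorem covid_next_generation_spectral_radius_general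
    (Pi b1 b2 nu mu ga p eu en su sn sh dn dh au an mc : ℝ)
    (hPi : 0 < Pi) (hb1 : 0 < b1) (hb2 : 0 < b2) (hnu : 0 < nu)
    (hmu : 0 < mu) (hga : 0 < ga) (hp : 0 < p) (hp1 : p < 1)
    (heu : 0 < eu) (hen : 0 < en) (hsu : 0 < su) (hsn : 0 < sn) (hsh : 0 < sh)
    (hdn : 0 < dn) (hdh : 0 < dh) (hau : 0 < au) (han : 0 < an) (hmc : 0 < mc)
    (phiu phin phih : ℝ)
    (hphiu : phiu = eu + su + mu) (hphin : phin = en + sn + mu + dn)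
    (hphih : phih = sh + mu + dh)
    (F W : Matrix (Fin 5) (Fin 5) ℝ)
    (hF : F = !![0, b1, b1 * nu, 0, b2 * Pi / mu;
                 0, 0, 0, 0, 0;
                 0, 0, 0, 0, 0;
                 0, 0, 0, 0, 0;
                 0, 0, 0, 0, 0])
    (hW : W = !![ga + mu, 0, 0, 0, 0;
                 -(1 - p) * ga, phiu, 0, 0, 0;
                 -p * ga, 0, phin, 0, 0;
                 0, -eu, -en, phih, 0;
                 0, -au, -an, 0, mc])
    (R0 : ℝ)
    (hR0 : R0 = (1 - p) * ga * b1 / (phiu * (ga + mu))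
      + p * ga * nu * b1 / (phin * (ga + mu))
      + (1 - p) * ga * au * b2 * (Pi / mu) / (mc * phiu * (ga + mu))
      + p * ga * an * b2 * (Pi / mu) / (mc * phin * (ga + mu))) :
    IsUnit W.det ∧
      spectralRadius ℂ ((F * W⁻¹).map Complex.ofReal) = ENNReal.ofReal R0 := by
  have hphiu0 : 0 < phiu := by rw [hphiu]; positivity
  have hphin0 : 0 < phin := by rw [hphin]; positivity
  have hphih0 : 0 < phih := by rw [hphih]; positivity
  have hWdet : W.det = (ga + mu) * phiu * phin * phih * mc := by
    have hWlow : W.IsLowerTriangular := by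
      intro i j hij
      rw [OrderDual.toDual_lt_toDual] at hij
      rw [hW]
      fin_cases i <;> fin_cases j <;> simp at hij ⊢
    rw [det_of_isLowerTriangular W hWlow, hW]
    simp [Fin.prod_univ_five]
  have hWunit : IsUnit W.det := by
    rw [hWdet]; exact isUnit_iff_ne_zero.mpr (by positivity)
  set f : Fin 5 → ℝ := ![0, b1, b1 * nu, 0, b2 * Pi / mu]
  set x1 := (1 - p) * ga / (phiu * (ga + mu))
  set x2 := p * ga / (phin * (ga + mu))
  set x : Fin 5 → ℝ :=
    ![1 / (ga + mu), x1, x2, (eu * x1 + en * x2) / phih, (au * x1 + an * x2) / mc]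
  have hFf : F = vecMulVec ![1, 0, 0, 0, 0] f := by
    rw [hF]; ext i j; fin_cases i <;> fin_cases j <;> simp [f, vecMulVec_apply]
  have hWx : W *ᵥ x = ![1, 0, 0, 0, 0] := by
    rw [hW]; ext i
    fin_cases i <;> simp [x, x1, x2, mulVec, dotProduct, Fin.sum_univ_five] <;> field_simp <;> ring
  have hfx : f ⬝ᵥ x = R0 := by
    rw [hR0]; simp [f, x, x1, x2, dotProduct, Fin.sum_univ_five]; field_simp; ring
  have hR0_nonneg : 0 ≤ R0 := by
    rw [hR0]; positivity
  refine ⟨hWunit, ?_⟩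
  rw [hFf, ← Complex.coe_algebraMap, spectralRadius_map_vecMulVec_mul_nonsing_inv hWunit hWx, hfx,
    ← enorm_eq_nnnorm, Real.enorm_eq_ofReal hR0_nonneg]

/-- the transition matrix `W` is invertible and the spectral
radius of the next-generation matrix `F * W⁻¹` equals the basic reproduction
number `ℛ₀` of the COVID-19 model. -/
theorem covid_next_generation_spectral_radius
    (Pi b1 b2 nu th mu ga p eu en su sn sh dn dh au an mc : ℝ)
    (hPi : 0 < Pi) (hb1 : 0 < b1) (hb2 : 0 < b2) (hnu : 0 < nu) (hnu1 : nu < 1)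
    (hth : 0 < th) (hmu : 0 < mu) (hga : 0 < ga) (hp : 0 < p) (hp1 : p < 1)
    (heu : 0 < eu) (hen : 0 < en) (hsu : 0 < su) (hsn : 0 < sn) (hsh : 0 < sh)
    (hdn : 0 < dn) (hdh : 0 < dh) (hau : 0 < au) (han : 0 < an) (hmc : 0 < mc)
    (phiu phin phih : ℝ)
    (hphiu : phiu = eu + su + mu) (hphin : phin = en + sn + mu + dn)
    (hphih : phih = sh + mu + dh)
    (F W : Matrix (Fin 5) (Fin 5) ℝ)
    (hF : F = !![0, b1, b1 * nu, 0, b2 * Pi / mu;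
                 0, 0, 0, 0, 0;
                 0, 0, 0, 0, 0;
                 0, 0, 0, 0, 0;
                 0, 0, 0, 0, 0])
    (hW : W = !![ga + mu, 0, 0, 0, 0;
                 -(1 - p) * ga, phiu, 0, 0, 0;
                 -p * ga, 0, phin, 0, 0;
                 0, -eu, -en, phih, 0;
                 0, -au, -an, 0, mc])
    (R0 : ℝ)
    (hR0 : R0 = (1 - p) * ga * b1 / (phiu * (ga + mu))
      + p * ga * nu * b1 / (phin * (ga + mu))
      + (1 - p) * ga * au * b2 * (Pi / mu) / (mc * phiu * (ga + mu))
      + p * ga * an * b2 * (Pi / mu) / (mc * phin * (ga + mu))) :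
    IsUnit W.det ∧
      spectralRadius ℂ ((F * W⁻¹).map Complex.ofReal) = ENNReal.ofReal R0 :=
  covid_next_generation_spectral_radius_general Pi b1 b2 nu mu ga p eu en su sn sh dn dh au an mc
    hPi hb1 hb2 hnu hmu hga hp hp1 heu hen hsu hsn hsh hdn hdh hau han hmc phiu phin phih hphiu
    hphin hphih F W hF hW R0 hR0
end

section
/- Let all model parameters be positive and set φ_u = η_u+σ_u+μ, φ_n = η_n+σ_n+μ+δ_n. Define for complex λ the function H(λ) = (1−p)·γ·β1/((λ+φ_u)·(λ+γ+μ)) + p·γ·ν·β1/((λ+φ_n)·(λ+γ+μ)) + (1−p)·γ·α_u·β2·(Π/μ)/((λ+μ_c)·(λ+φ_u)·(λ+γ+μ)) + p·γ·α_n·β2·(Π/μ)/((λ+μ_c)·(λ+φ_n)·(λ+γ+μ)). Then for every λ ∈ ℂ with Re(λ) ≥ 0, all denominators are nonzero and |H(λ)| ≤ H(0), where H(0) is the real number ℛ₀. -/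
/-! On the closed right half-plane every factor `λ + a` with `a > 0` has modulus at least
`Re (λ + a) ≥ a`. Each of the four summands of `H` has a nonnegative real numerator, so its
modulus is at most its value at `λ = 0`, and the triangle inequality gives `‖H λ‖ ≤ H 0 = ℛ₀`. -/

namespace Complex

variable {z : ℂ}

lemma le_norm_add_ofReal (hz : 0 ≤ z.re) (a : ℝ) : a ≤ ‖z + a‖ :=
  calc a ≤ (z + a).re := by simpa using hz
    _ ≤ ‖z + a‖ := re_le_norm _

lemma add_ofReal_ne_zero (hz : 0 ≤ z.re) {a : ℝ} (ha : 0 < a) : z + a ≠ 0 :=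
  norm_pos_iff.mp (ha.trans_le (le_norm_add_ofReal hz a))

lemma norm_ofReal_div_le {c r : ℝ} {w : ℂ} (hc : 0 ≤ c) (hr : 0 < r) (h : r ≤ ‖w‖) :
    ‖(c : ℂ) / w‖ ≤ c / r := by
  rw [norm_div, norm_real, Real.norm_of_nonneg hc]
  exact div_le_div_of_nonneg_left hc hr h

lemma mul_le_norm_add_mul_add (hz : 0 ≤ z.re) {a b : ℝ} (hb : 0 ≤ b) :
    a * b ≤ ‖(z + a) * (z + b)‖ := by
  rw [norm_mul]
  exact mul_le_mul (le_norm_add_ofReal hz a) (le_norm_add_ofReal hz b) hb (norm_nonneg _)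

lemma norm_ofReal_div_add_mul_add_le (hz : 0 ≤ z.re) {c a b : ℝ} (hc : 0 ≤ c)
    (ha : 0 < a) (hb : 0 < b) :
    ‖(c : ℂ) / ((z + a) * (z + b))‖ ≤ c / (a * b) :=
  norm_ofReal_div_le hc (by positivity) (mul_le_norm_add_mul_add hz hb.le)

lemma norm_ofReal_div_add_mul_add_mul_add_le (hz : 0 ≤ z.re) {c a b d : ℝ} (hc : 0 ≤ c)
    (ha : 0 < a) (hb : 0 < b) (hd : 0 < d) :
    ‖(c : ℂ) / ((z + a) * (z + b) * (z + d))‖ ≤ c / (a * b * d) := by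
  refine norm_ofReal_div_le hc (by positivity) ?_
  rw [norm_mul]
  exact mul_le_mul (mul_le_norm_add_mul_add hz hb.le) (le_norm_add_ofReal hz d) hd.le
    (norm_nonneg _)

end Complex

theorem covid_H_modulus_bound_general
    (Pi b1 b2 nu mu ga p eu en su sn dn au an mc : ℝ)
    (hPi : 0 < Pi) (hb1 : 0 < b1) (hb2 : 0 < b2) (hnu : 0 < nu)
    (hmu : 0 < mu) (hga : 0 < ga) (hp : 0 < p) (hp1 : p < 1)
    (heu : 0 < eu) (hen : 0 < en) (hsu : 0 < su) (hsn : 0 < sn)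
    (hdn : 0 < dn) (hau : 0 < au) (han : 0 < an) (hmc : 0 < mc)
    (phiu phin : ℝ)
    (hphiu : phiu = eu + su + mu) (hphin : phin = en + sn + mu + dn)
    (H : ℂ → ℂ)
    (hH : ∀ lam : ℂ, H lam =
      ((((1 - p) * ga * b1 : ℝ) : ℂ) / ((lam + (phiu : ℂ)) * (lam + ((ga + mu : ℝ) : ℂ))))
      + (((p * ga * nu * b1 : ℝ) : ℂ) / ((lam + (phin : ℂ)) * (lam + ((ga + mu : ℝ) : ℂ))))
      + ((((1 - p) * ga * au * b2 * (Pi / mu) : ℝ) : ℂ) /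
          ((lam + (mc : ℂ)) * (lam + (phiu : ℂ)) * (lam + ((ga + mu : ℝ) : ℂ))))
      + (((p * ga * an * b2 * (Pi / mu) : ℝ) : ℂ) /
          ((lam + (mc : ℂ)) * (lam + (phin : ℂ)) * (lam + ((ga + mu : ℝ) : ℂ)))))
    (R0 : ℝ)
    (hR0 : R0 = (1 - p) * ga * b1 / (phiu * (ga + mu))
      + p * ga * nu * b1 / (phin * (ga + mu))
      + (1 - p) * ga * au * b2 * (Pi / mu) / (mc * phiu * (ga + mu))
      + p * ga * an * b2 * (Pi / mu) / (mc * phin * (ga + mu))) :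
    ∀ lam : ℂ, 0 ≤ lam.re →
      (lam + (phiu : ℂ) ≠ 0 ∧ lam + (phin : ℂ) ≠ 0 ∧ lam + (mc : ℂ) ≠ 0 ∧
        lam + ((ga + mu : ℝ) : ℂ) ≠ 0) ∧
      ‖H lam‖ ≤ R0 := by
  intro lam hlam
  have hphiu_pos : 0 < phiu := by rw [hphiu]; positivity
  have hphin_pos : 0 < phin := by rw [hphin]; positivity
  have hgamu_pos : 0 < ga + mu := by positivity
  have hq : 0 < 1 - p := sub_pos.mpr hp1
  refine ⟨⟨Complex.add_ofReal_ne_zero hlam hphiu_pos, Complex.add_ofReal_ne_zero hlam hphin_pos,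
    Complex.add_ofReal_ne_zero hlam hmc, Complex.add_ofReal_ne_zero hlam hgamu_pos⟩, ?_⟩
  rw [hH, hR0]
  refine (norm_add₄_le ..).trans ?_
  gcongr
  · exact Complex.norm_ofReal_div_add_mul_add_le hlam (by positivity) hphiu_pos hgamu_pos
  · exact Complex.norm_ofReal_div_add_mul_add_le hlam (by positivity) hphin_pos hgamu_pos
  · exact Complex.norm_ofReal_div_add_mul_add_mul_add_le hlam (by positivity)
      hmc hphiu_pos hgamu_pos
  · exact Complex.norm_ofReal_div_add_mul_add_mul_add_le hlam (by positivity)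
      hmc hphin_pos hgamu_pos

/-- for every complex `λ` with `Re λ ≥ 0`, the denominators of the
rational function `H` are nonzero and `|H(λ)| ≤ H(0) = ℛ₀`. -/
theorem covid_H_modulus_bound
    (Pi b1 b2 nu th mu ga p eu en su sn sh dn dh au an mc : ℝ)
    (hPi : 0 < Pi) (hb1 : 0 < b1) (hb2 : 0 < b2) (hnu : 0 < nu) (hnu1 : nu < 1)
    (hth : 0 < th) (hmu : 0 < mu) (hga : 0 < ga) (hp : 0 < p) (hp1 : p < 1)
    (heu : 0 < eu) (hen : 0 < en) (hsu : 0 < su) (hsn : 0 < sn) (hsh : 0 < sh)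
    (hdn : 0 < dn) (hdh : 0 < dh) (hau : 0 < au) (han : 0 < an) (hmc : 0 < mc)
    (phiu phin : ℝ)
    (hphiu : phiu = eu + su + mu) (hphin : phin = en + sn + mu + dn)
    (H : ℂ → ℂ)
    (hH : ∀ lam : ℂ, H lam =
      ((((1 - p) * ga * b1 : ℝ) : ℂ) / ((lam + (phiu : ℂ)) * (lam + ((ga + mu : ℝ) : ℂ))))
      + (((p * ga * nu * b1 : ℝ) : ℂ) / ((lam + (phin : ℂ)) * (lam + ((ga + mu : ℝ) : ℂ))))
      + ((((1 - p) * ga * au * b2 * (Pi / mu) : ℝ) : ℂ) /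
          ((lam + (mc : ℂ)) * (lam + (phiu : ℂ)) * (lam + ((ga + mu : ℝ) : ℂ))))
      + (((p * ga * an * b2 * (Pi / mu) : ℝ) : ℂ) /
          ((lam + (mc : ℂ)) * (lam + (phin : ℂ)) * (lam + ((ga + mu : ℝ) : ℂ)))))
    (R0 : ℝ)
    (hR0 : R0 = (1 - p) * ga * b1 / (phiu * (ga + mu))
      + p * ga * nu * b1 / (phin * (ga + mu))
      + (1 - p) * ga * au * b2 * (Pi / mu) / (mc * phiu * (ga + mu))
      + p * ga * an * b2 * (Pi / mu) / (mc * phin * (ga + mu))) :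
    ∀ lam : ℂ, 0 ≤ lam.re →
      (lam + (phiu : ℂ) ≠ 0 ∧ lam + (phin : ℂ) ≠ 0 ∧ lam + (mc : ℂ) ≠ 0 ∧
        lam + ((ga + mu : ℝ) : ℂ) ≠ 0) ∧
      ‖H lam‖ ≤ R0 :=
  covid_H_modulus_bound_general Pi b1 b2 nu mu ga p eu en su sn dn au an mc hPi hb1 hb2 hnu hmu hga
    hp hp1 heu hen hsu hsn hdn hau han hmc phiu phin hphiu hphin H hH R0 hR0
end

section
/- Let all model parameters be positive and set φ_u = η_u+σ_u+μ, φ_n = η_n+σ_n+μ+δ_n. Let M be the 4×4 real matrix with rows (−(γ+μ), β1, ν·β1, Π·β2/μ), ((1−p)·γ, −φ_u, 0, 0), (p·γ, 0, −φ_n, 0), (0, α_u, α_n, −μ_c). Then for every complex λ with λ ∉ {−μ_c, −φ_n, −φ_u, −(γ+μ)}, one has det(M − λ·I₄) = (λ+μ_c)·(λ+φ_n)·(λ+φ_u)·(λ+γ+μ)·(1 − H(λ)), where H(λ) = (1−p)·γ·β1/((λ+φ_u)·(λ+γ+μ)) + p·γ·ν·β1/((λ+φ_n)·(λ+γ+μ))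 + (1−p)·γ·α_u·β2·(Π/μ)/((λ+μ_c)·(λ+φ_u)·(λ+γ+μ)) + p·γ·α_n·β2·(Π/μ)/((λ+μ_c)·(λ+φ_n)·(λ+γ+μ)). In particular det(M − λ·I₄) = 0 if and only if H(λ) = 1 for such λ. -/
/-!
The only cycles of the interaction graph of `M` (E → I_u → E, E → I_n → E, E → I_u → V → E,
E → I_n → V → E) all pass through `E`, so the Leibniz expansion of `det (M - λ I)` is the product
of the diagonal entries minus one term per cycle. Dividing by that product turns the four cycle
terms into the four summands of `H λ`.
-/

open Matrix

theorem det_fin_four_of_cycles_through_zero {R : Type*} [CommRing R] (a b c d e f g h i j k : R) :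
    det !![a, b, c, d; e, f, 0, 0; g, 0, h, 0; 0, i, j, k] =
      a * f * h * k - e * b * h * k - g * c * f * k + e * i * d * h + g * j * d * f := by
  simp [det_succ_row_zero, Fin.sum_univ_succ, Fin.succAbove]
  ring

theorem det_fin_four_eq_prod_mul_one_sub_loop_gain {K : Type*} [Field K]
    (A F N C b c d e g i j : K) (hA : A ≠ 0) (hF : F ≠ 0) (hN : N ≠ 0) (hC : C ≠ 0) :
    det !![-A, b, c, d; e, -F, 0, 0; g, 0, -N, 0; 0, i, j, -C] =
      C * N * F * A * (1 - (e * b / (F * A) + g * c / (N * A) + e * i * d / (C * F * A)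
        + g * j * d / (C * N * A))) := by
  rw [det_fin_four_of_cycles_through_zero]
  field_simp
  ring

theorem covid_char_det_factorization_general
    (Pi b1 b2 nu mu ga p au an mc : ℝ)
    (phiu phin : ℝ)
    (M : Matrix (Fin 4) (Fin 4) ℝ)
    (hM : M = !![-(ga + mu), b1, nu * b1, Pi * b2 / mu;
                 (1 - p) * ga, -phiu, 0, 0;
                 p * ga, 0, -phin, 0;
                 0, au, an, -mc])
    (H : ℂ → ℂ)
    (hH : ∀ lam : ℂ, H lam =
      ((((1 - p) * ga * b1 : ℝ) : ℂ) / ((lam + (phiu : ℂ)) * (lam + ((ga + mu : ℝ) : ℂ))))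
      + (((p * ga * nu * b1 : ℝ) : ℂ) / ((lam + (phin : ℂ)) * (lam + ((ga + mu : ℝ) : ℂ))))
      + ((((1 - p) * ga * au * b2 * (Pi / mu) : ℝ) : ℂ) /
          ((lam + (mc : ℂ)) * (lam + (phiu : ℂ)) * (lam + ((ga + mu : ℝ) : ℂ))))
      + (((p * ga * an * b2 * (Pi / mu) : ℝ) : ℂ) /
          ((lam + (mc : ℂ)) * (lam + (phin : ℂ)) * (lam + ((ga + mu : ℝ) : ℂ))))) :
    ∀ lam : ℂ, lam ≠ -(mc : ℂ) → lam ≠ -(phin : ℂ) → lam ≠ -(phiu : ℂ) →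
      lam ≠ -((ga + mu : ℝ) : ℂ) →
      (M.map Complex.ofReal - lam • (1 : Matrix (Fin 4) (Fin 4) ℂ)).det =
        (lam + (mc : ℂ)) * (lam + (phin : ℂ)) * (lam + (phiu : ℂ)) *
          (lam + ((ga + mu : ℝ) : ℂ)) * (1 - H lam) ∧
      ((M.map Complex.ofReal - lam • (1 : Matrix (Fin 4) (Fin 4) ℂ)).det = 0 ↔
        H lam = 1) := by
  intro lam hmc hphin hphiu hgamu
  have hM_sub : M.map Complex.ofReal - lam • (1 : Matrix (Fin 4) (Fin 4) ℂ) =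
      !![-(lam + ((ga + mu : ℝ) : ℂ)), (b1 : ℂ), (nu * b1 : ℝ), (Pi * b2 / mu : ℝ);
         ((1 - p) * ga : ℝ), -(lam + phiu), 0, 0;
         (p * ga : ℝ), 0, -(lam + phin), 0;
         0, (au : ℂ), (an : ℂ), -(lam + mc)] := by
    subst hM
    ext i j
    fin_cases i <;> fin_cases j <;> simp <;> ring
  have hA : lam + ((ga + mu : ℝ) : ℂ) ≠ 0 := add_eq_zero_iff_eq_neg.not.mpr hgamu
  have hF : lam + (phiu : ℂ) ≠ 0 := add_eq_zero_iff_eq_neg.not.mpr hphiu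
  have hN : lam + (phin : ℂ) ≠ 0 := add_eq_zero_iff_eq_neg.not.mpr hphin
  have hC : lam + (mc : ℂ) ≠ 0 := add_eq_zero_iff_eq_neg.not.mpr hmc
  have hfactor : (M.map Complex.ofReal - lam • (1 : Matrix (Fin 4) (Fin 4) ℂ)).det =
      (lam + (mc : ℂ)) * (lam + (phin : ℂ)) * (lam + (phiu : ℂ)) *
        (lam + ((ga + mu : ℝ) : ℂ)) * (1 - H lam) := by
    rw [hM_sub, hH,
      det_fin_four_eq_prod_mul_one_sub_loop_gain (hA := hA) (hF := hF) (hN := hN) (hC := hC)]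
    push_cast
    ring
  refine ⟨hfactor, ?_⟩
  rw [hfactor, mul_eq_zero, or_iff_right (mul_ne_zero (mul_ne_zero (mul_ne_zero hC hN) hF) hA),
    sub_eq_zero, eq_comm]

/-- factorization of the characteristic determinant of the
nontrivial 4×4 block `M` of the Jacobian at the disease-free equilibrium:
`det(M − λI) = (λ+μ_c)(λ+φ_n)(λ+φ_u)(λ+γ+μ)(1 − H(λ))`, hence
`det(M − λI) = 0 ↔ H(λ) = 1` away from the poles. -/
theorem covid_char_det_factorization
    (Pi b1 b2 nu th mu ga p eu en su sn sh dn dh au an mc : ℝ)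
    (hPi : 0 < Pi) (hb1 : 0 < b1) (hb2 : 0 < b2) (hnu : 0 < nu) (hnu1 : nu < 1)
    (hth : 0 < th) (hmu : 0 < mu) (hga : 0 < ga) (hp : 0 < p) (hp1 : p < 1)
    (heu : 0 < eu) (hen : 0 < en) (hsu : 0 < su) (hsn : 0 < sn) (hsh : 0 < sh)
    (hdn : 0 < dn) (hdh : 0 < dh) (hau : 0 < au) (han : 0 < an) (hmc : 0 < mc)
    (phiu phin : ℝ)
    (hphiu : phiu = eu + su + mu) (hphin : phin = en + sn + mu + dn)
    (M : Matrix (Fin 4) (Fin 4) ℝ)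
    (hM : M = !![-(ga + mu), b1, nu * b1, Pi * b2 / mu;
                 (1 - p) * ga, -phiu, 0, 0;
                 p * ga, 0, -phin, 0;
                 0, au, an, -mc])
    (H : ℂ → ℂ)
    (hH : ∀ lam : ℂ, H lam =
      ((((1 - p) * ga * b1 : ℝ) : ℂ) / ((lam + (phiu : ℂ)) * (lam + ((ga + mu : ℝ) : ℂ))))
      + (((p * ga * nu * b1 : ℝ) : ℂ) / ((lam + (phin : ℂ)) * (lam + ((ga + mu : ℝ) : ℂ))))
      + ((((1 - p) * ga * au * b2 * (Pi / mu) : ℝ) : ℂ) /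
          ((lam + (mc : ℂ)) * (lam + (phiu : ℂ)) * (lam + ((ga + mu : ℝ) : ℂ))))
      + (((p * ga * an * b2 * (Pi / mu) : ℝ) : ℂ) /
          ((lam + (mc : ℂ)) * (lam + (phin : ℂ)) * (lam + ((ga + mu : ℝ) : ℂ))))) :
    ∀ lam : ℂ, lam ≠ -(mc : ℂ) → lam ≠ -(phin : ℂ) → lam ≠ -(phiu : ℂ) →
      lam ≠ -((ga + mu : ℝ) : ℂ) →
      (M.map Complex.ofReal - lam • (1 : Matrix (Fin 4) (Fin 4) ℂ)).det =
        (lam + (mc : ℂ)) * (lam + (phin : ℂ)) * (lam + (phiu : ℂ)) *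
          (lam + ((ga + mu : ℝ) : ℂ)) * (1 - H lam) ∧
      ((M.map Complex.ofReal - lam • (1 : Matrix (Fin 4) (Fin 4) ℂ)).det = 0 ↔
        H lam = 1) :=
  covid_char_det_factorization_general Pi b1 b2 nu mu ga p au an mc phiu phin M hM H hH
end

section
/- Let all model parameters be positive, set φ_u = η_u+σ_u+μ, φ_n = η_n+σ_n+μ+δ_n, and define for real λ ≥ 0 the function H(λ) = (1−p)·γ·β1/((λ+φ_u)·(λ+γ+μ)) + p·γ·ν·β1/((λ+φ_n)·(λ+γ+μ)) + (1−p)·γ·α_u·β2·(Π/μ)/((λ+μ_c)·(λ+φ_u)·(λ+γ+μ)) + p·γ·α_n·β2·(Π/μ)/((λ+μ_c)·(λ+φ_n)·(λ+γ+μ)). If ℛ₀ = H(0) > 1, then there exists a real λ* > 0 with H(λ*) = 1; consequently the Jacobian at the disease-free equilibrium has a positive real eigenvalue and the disease-free equilibrium is unstable. -/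
/-!
Reordering the coordinates as `(1, 2, 3, 6 | 0, 4, 5)` makes `λ • 1 - J` block lower triangular.
The `3 × 3` block only contributes the factors `(λ + μ)(λ + φ_h)(λ + θ + μ)`, and clearing the
denominators of `H` shows that the `4 × 4` block has determinant
`(λ + μ_c)(λ + φ_u)(λ + φ_n)(λ + γ + μ)(1 - H λ)`. On `[0, ∞)` the function `H` is continuous,
starts at `ℛ₀ > 1` and tends to `0`, so by the intermediate value theorem it takes the value `1`
at some `λ* > 0`, which is then a root of the characteristic polynomial of `J`.
-/

open Filter Topology Set Matrix

theorem exists_pos_eq_of_continuousOn_Ici_of_tendsto {f : ℝ → ℝ} {L c : ℝ}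
    (hf : ContinuousOn f (Ici 0)) (hlim : Tendsto f atTop (𝓝 L)) (hLc : L < c)
    (hc : c < f 0) : ∃ x, 0 < x ∧ f x = c := by
  obtain ⟨M, hM0, hfM⟩ :=
    ((eventually_ge_atTop 0).and (hlim.eventually (gt_mem_nhds hLc))).exists
  obtain ⟨x, hx, hfx⟩ :=
    intermediate_value_Icc' hM0 (hf.mono Icc_subset_Ici_self) ⟨hfM.le, hc.le⟩
  exact ⟨x, hx.1.lt_of_ne (by rintro rfl; exact hc.ne' hfx), hfx⟩

noncomputable def dfeJacobian
    (Pi b1 b2 nu th mu ga p eu en su sn sh au an mc phiu phin phih : ℝ) : Matrix (Fin 7) (Fin 7) ℝ :=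
  !![-mu, 0, -b1, -nu * b1, 0, th, -Pi * b2 / mu;
     0, -(ga + mu), b1, nu * b1, 0, 0, Pi * b2 / mu;
     0, (1 - p) * ga, -phiu, 0, 0, 0, 0;
     0, p * ga, 0, -phin, 0, 0, 0;
     0, 0, eu, en, -phih, 0, 0;
     0, 0, su, sn, sh, -(th + mu), 0;
     0, 0, au, an, 0, 0, -mc]

section ReducedCharacteristicEquation

variable (Pi b1 b2 nu mu ga p au an mc phiu phin : ℝ)

noncomputable def reducedCharFn (lam : ℝ) : ℝ :=
  (1 - p) * ga * b1 / ((lam + phiu) * (lam + ga + mu))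
    + p * ga * nu * b1 / ((lam + phin) * (lam + ga + mu))
    + (1 - p) * ga * au * b2 * (Pi / mu) / ((lam + mc) * (lam + phiu) * (lam + ga + mu))
    + p * ga * an * b2 * (Pi / mu) / ((lam + mc) * (lam + phin) * (lam + ga + mu))

noncomputable def reducedCharPoly (lam : ℝ) : ℝ :=
  (lam + mc) * (lam + phiu) * (lam + phin) * (lam + (ga + mu))
    - (1 - p) * ga * b1 * (lam + phin) * (lam + mc)
    - p * ga * (nu * b1) * (lam + phiu) * (lam + mc)
    - (1 - p) * ga * au * (Pi * b2 / mu) * (lam + phin)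
    - p * ga * an * (Pi * b2 / mu) * (lam + phiu)

theorem reducedCharPoly_eq_mul_one_sub {lam : ℝ} (hphiu : lam + phiu ≠ 0)
    (hphin : lam + phin ≠ 0) (hmc : lam + mc ≠ 0) (hgamu : lam + ga + mu ≠ 0) :
    reducedCharPoly Pi b1 b2 nu mu ga p au an mc phiu phin lam =
      (lam + mc) * (lam + phiu) * (lam + phin) * (lam + ga + mu) *
        (1 - reducedCharFn Pi b1 b2 nu mu ga p au an mc phiu phin lam) := by
  unfold reducedCharPoly reducedCharFn
  field_simp
  ring

theorem continuousOn_reducedCharFn (hphiu : 0 < phiu) (hphin : 0 < phin) (hmc : 0 < mc)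
    (hgamu : 0 < ga + mu) :
    ContinuousOn (reducedCharFn Pi b1 b2 nu mu ga p au an mc phiu phin) (Ici 0) := by
  have hpos : ∀ a > 0, ∀ lam ∈ Ici (0 : ℝ), lam + a ≠ 0 := fun a ha lam hlam =>
    (add_pos_of_nonneg_of_pos hlam ha).ne'
  have hgm : ∀ lam ∈ Ici (0 : ℝ), lam + ga + mu ≠ 0 := fun lam hlam => by
    rw [add_assoc]; exact hpos _ hgamu lam hlam
  unfold reducedCharFn
  refine ((ContinuousOn.add ?_ ?_).add ?_).add ?_ <;>
    refine continuousOn_const.div (by fun_prop) fun lam hlam => ?_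
  · exact mul_ne_zero (hpos _ hphiu lam hlam) (hgm lam hlam)
  · exact mul_ne_zero (hpos _ hphin lam hlam) (hgm lam hlam)
  · exact mul_ne_zero (mul_ne_zero (hpos _ hmc lam hlam) (hpos _ hphiu lam hlam)) (hgm lam hlam)
  · exact mul_ne_zero (mul_ne_zero (hpos _ hmc lam hlam) (hpos _ hphin lam hlam)) (hgm lam hlam)

theorem tendsto_reducedCharFn_atTop :
    Tendsto (reducedCharFn Pi b1 b2 nu mu ga p au an mc phiu phin) atTop (𝓝 0) := by
  have hlin : ∀ a : ℝ, Tendsto (fun lam : ℝ => lam + a) atTop atTop := fun a =>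
    tendsto_atTop_add_const_right _ a tendsto_id
  have hgm : Tendsto (fun lam : ℝ => lam + ga + mu) atTop atTop := by
    simpa only [add_assoc] using hlin (ga + mu)
  rw [show (0 : ℝ) = 0 + 0 + 0 + 0 by norm_num]
  unfold reducedCharFn
  refine ((Tendsto.add ?_ ?_).add ?_).add ?_ <;> refine tendsto_const_nhds.div_atTop ?_
  · exact (hlin phiu).atTop_mul_atTop₀ hgm
  · exact (hlin phin).atTop_mul_atTop₀ hgm
  · exact ((hlin mc).atTop_mul_atTop₀ (hlin phiu)).atTop_mul_atTop₀ hgm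
  · exact ((hlin mc).atTop_mul_atTop₀ (hlin phin)).atTop_mul_atTop₀ hgm

end ReducedCharacteristicEquation

theorem det_smul_one_sub_dfeJacobian
    (Pi b1 b2 nu th mu ga p eu en su sn sh au an mc phiu phin phih lam : ℝ) :
    (lam • (1 : Matrix (Fin 7) (Fin 7) ℝ) -
        dfeJacobian Pi b1 b2 nu th mu ga p eu en su sn sh au an mc phiu phin phih).det =
      (lam + mu) * (lam + phih) * (lam + (th + mu)) *
        reducedCharPoly Pi b1 b2 nu mu ga p au an mc phiu phin lam := by
  let e : Fin 4 ⊕ Fin 3 ≃ Fin 7 :=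
    ⟨Sum.elim ![1, 2, 3, 6] ![0, 4, 5],
      ![.inr 0, .inl 0, .inl 1, .inl 2, .inr 1, .inr 2, .inl 3], by decide, by decide⟩
  have hblocks : (lam • (1 : Matrix (Fin 7) (Fin 7) ℝ) -
        dfeJacobian Pi b1 b2 nu th mu ga p eu en su sn sh au an mc phiu phin phih).submatrix e e =
      fromBlocks
        !![lam + (ga + mu), -b1, -(nu * b1), -(Pi * b2 / mu);
           -((1 - p) * ga), lam + phiu, 0, 0;
           -(p * ga), 0, lam + phin, 0;
           0, -au, -an, lam + mc]
        0
        !![0, b1, nu * b1, Pi * b2 / mu;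
           0, -eu, -en, 0;
           0, -su, -sn, 0]
        !![lam + mu, 0, -th;
           0, lam + phih, 0;
           0, -sh, lam + (th + mu)] := by
    ext (i | i) (j | j) <;> fin_cases i <;> fin_cases j <;>
      simp [e, dfeJacobian, one_apply] <;> ring
  rw [← det_submatrix_equiv_self e, hblocks, det_fromBlocks_zero₁₂, det_fin_three]
  simp [det_succ_row_zero, Fin.sum_univ_succ, Fin.succAbove, reducedCharPoly]
  ring

theorem covid_DFE_unstable_general
    (Pi b1 b2 nu th mu ga p eu en su sn sh dn au an mc : ℝ)
    (hmu : 0 < mu) (hga : 0 < ga)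
    (heu : 0 < eu) (hen : 0 < en) (hsu : 0 < su) (hsn : 0 < sn)
    (hdn : 0 < dn) (hmc : 0 < mc)
    (phiu phin phih : ℝ)
    (hphiu : phiu = eu + su + mu) (hphin : phin = en + sn + mu + dn)
    (H : ℝ → ℝ)
    (hH : ∀ lam ≥ (0 : ℝ), H lam =
      (1 - p) * ga * b1 / ((lam + phiu) * (lam + ga + mu))
      + p * ga * nu * b1 / ((lam + phin) * (lam + ga + mu))
      + (1 - p) * ga * au * b2 * (Pi / mu) / ((lam + mc) * (lam + phiu) * (lam + ga + mu))
      + p * ga * an * b2 * (Pi / mu) / ((lam + mc) * (lam + phin) * (lam + ga + mu)))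
    (J : Matrix (Fin 7) (Fin 7) ℝ)
    (hJ : J = !![-mu, 0, -b1, -nu * b1, 0, th, -Pi * b2 / mu;
                 0, -(ga + mu), b1, nu * b1, 0, 0, Pi * b2 / mu;
                 0, (1 - p) * ga, -phiu, 0, 0, 0, 0;
                 0, p * ga, 0, -phin, 0, 0, 0;
                 0, 0, eu, en, -phih, 0, 0;
                 0, 0, su, sn, sh, -(th + mu), 0;
                 0, 0, au, an, 0, 0, -mc])
    (hR0 : H 0 > 1) :
    ∃ lamstar : ℝ, 0 < lamstar ∧ H lamstar = 1 ∧
      (lamstar • (1 : Matrix (Fin 7) (Fin 7) ℝ) - J).det = 0 := by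
  have hphiu_pos : 0 < phiu := by rw [hphiu]; positivity
  have hphin_pos : 0 < phin := by rw [hphin]; positivity
  have hR0' : 1 < reducedCharFn Pi b1 b2 nu mu ga p au an mc phiu phin 0 := by
    rwa [hH 0 le_rfl] at hR0
  obtain ⟨lam, hlam, hHlam⟩ := exists_pos_eq_of_continuousOn_Ici_of_tendsto
    (continuousOn_reducedCharFn Pi b1 b2 nu mu ga p au an mc phiu phin hphiu_pos hphin_pos hmc
      (by positivity))
    (tendsto_reducedCharFn_atTop Pi b1 b2 nu mu ga p au an mc phiu phin) zero_lt_one hR0'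
  refine ⟨lam, hlam, (hH lam hlam.le).trans hHlam, ?_⟩
  have hdet := det_smul_one_sub_dfeJacobian Pi b1 b2 nu th mu ga p eu en su sn sh au an mc
    phiu phin phih lam
  rw [reducedCharPoly_eq_mul_one_sub Pi b1 b2 nu mu ga p au an mc phiu phin (by positivity)
    (by positivity) (by positivity) (by positivity), hHlam, sub_self, mul_zero, mul_zero] at hdet
  rw [hJ]
  exact hdet

/-- if `ℛ₀ = H(0) > 1` there is a real `λ* > 0` with `H(λ*) = 1`;
consequently `λ*` is a positive real eigenvalue of the Jacobian `J` at the
disease-free equilibrium, which is therefore unstable. -/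
theorem covid_DFE_unstable
    (Pi b1 b2 nu th mu ga p eu en su sn sh dn dh au an mc : ℝ)
    (hPi : 0 < Pi) (hb1 : 0 < b1) (hb2 : 0 < b2) (hnu : 0 < nu) (hnu1 : nu < 1)
    (hth : 0 < th) (hmu : 0 < mu) (hga : 0 < ga) (hp : 0 < p) (hp1 : p < 1)
    (heu : 0 < eu) (hen : 0 < en) (hsu : 0 < su) (hsn : 0 < sn) (hsh : 0 < sh)
    (hdn : 0 < dn) (hdh : 0 < dh) (hau : 0 < au) (han : 0 < an) (hmc : 0 < mc)
    (phiu phin phih : ℝ)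
    (hphiu : phiu = eu + su + mu) (hphin : phin = en + sn + mu + dn)
    (hphih : phih = sh + mu + dh)
    (H : ℝ → ℝ)
    (hH : ∀ lam ≥ (0 : ℝ), H lam =
      (1 - p) * ga * b1 / ((lam + phiu) * (lam + ga + mu))
      + p * ga * nu * b1 / ((lam + phin) * (lam + ga + mu))
      + (1 - p) * ga * au * b2 * (Pi / mu) / ((lam + mc) * (lam + phiu) * (lam + ga + mu))
      + p * ga * an * b2 * (Pi / mu) / ((lam + mc) * (lam + phin) * (lam + ga + mu)))
    (J : Matrix (Fin 7) (Fin 7) ℝ)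
    (hJ : J = !![-mu, 0, -b1, -nu * b1, 0, th, -Pi * b2 / mu;
                 0, -(ga + mu), b1, nu * b1, 0, 0, Pi * b2 / mu;
                 0, (1 - p) * ga, -phiu, 0, 0, 0, 0;
                 0, p * ga, 0, -phin, 0, 0, 0;
                 0, 0, eu, en, -phih, 0, 0;
                 0, 0, su, sn, sh, -(th + mu), 0;
                 0, 0, au, an, 0, 0, -mc])
    (hR0 : H 0 > 1) :
    ∃ lamstar : ℝ, 0 < lamstar ∧ H lamstar = 1 ∧
      (lamstar • (1 : Matrix (Fin 7) (Fin 7) ℝ) - J).det = 0 :=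
  covid_DFE_unstable_general Pi b1 b2 nu th mu ga p eu en su sn sh dn au an mc hmu hga heu hen hsu
    hsn hdn hmc phiu phin phih hphiu hphin H hH J hJ hR0
end

section
/- Let all model parameters be positive and set φ_u = η_u+σ_u+μ, φ_n = η_n+σ_n+μ+δ_n, φ_h = σ_h+μ+δ_h. Let J be the 7×7 real Jacobian matrix of the COVID-19 model at the disease-free equilibrium, with rows (ordering coordinates S, E, I_u, I_n, I_h, R, V): (−μ, 0, −β1, −ν·β1, 0, θ, −Π·β2/μ), (0, −(γ+μ), β1, ν·β1, 0, 0, Π·β2/μ), (0, (1−p)·γ, −φ_u, 0, 0, 0, 0), (0, p·γ, 0, −φ_n, 0, 0, 0), (0, 0, η_u, η_n, −φ_h, 0, 0), (0, 0, σ_u, σ_n, σ_h, −(θ+μ), 0), (0, 0, α_u, α_n, 0, 0, −μ_c), and let M be the 4×4 matrix with rows (−(γ+μ), β1, ν·β1, Π·β2/μ), ((1−p)·γ, −φ_u, 0, 0), (p·γ, 0, −φ_n, 0), (0, α_u, α_n, −μ_c). Then for all complex λ, det(λ·I₇ − J) = (λ+μ)·(λ+θ+μ)·(λ+φ_h)·det(λ·I₄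 − M); in particular −μ, −(θ+μ), and −φ_h are eigenvalues of J. -/
/-!
At the disease-free equilibrium the columns of `J` belonging to `S`, `R` and `I_h` (indices 0, 5
and 4) vanish off the diagonal, except for the entries `θ` (waning immunity, `R → S`) and `σ_h`
(`I_h → R`). Expanding `det (λ • 1 - J)` along these three columns in turn splits off `λ + μ`,
`λ + (θ + μ)` and `λ + φ_h`, and leaves the principal minor on `(E, I_u, I_n, V)`, which is
`λ • 1 - M`. This works over any `ℝ`-algebra: over `ℂ` it is the factorization, and over `ℝ`,
evaluated at the three roots, it gives the eigenvalues.
-/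

namespace Matrix

variable {R : Type*} [CommRing R] {n : ℕ}

theorem det_eq_mul_det_submatrix_succAbove_of_col_eq_zero
    (A : Matrix (Fin (n + 1)) (Fin (n + 1)) R) (j : Fin (n + 1)) (hA : ∀ i ≠ j, A i j = 0) :
    A.det = A j j * (A.submatrix j.succAbove j.succAbove).det := by
  rw [det_succ_column A j,
    Finset.sum_eq_single j (fun i _ hi => by rw [hA i hi, mul_zero, zero_mul]) (by simp)]
  simp [← two_mul, pow_mul]

theorem det_smul_one_sub_eq_mul_of_col_eq_zero
    (A : Matrix (Fin (n + 1)) (Fin (n + 1)) R) (j : Fin (n + 1)) (hA : ∀ i ≠ j, A i j = 0)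
    (c : R) :
    (c • 1 - A).det = (c - A j j) * (c • 1 - A.submatrix j.succAbove j.succAbove).det := by
  rw [det_eq_mul_det_submatrix_succAbove_of_col_eq_zero _ j fun i hi => by simp [hA i hi, hi]]
  simp [submatrix_sub, submatrix_smul, submatrix_one _ Fin.succAbove_right_injective]

theorem det_smul_one_sub_fin_seven_of_cols_eq_zero (A : Matrix (Fin 7) (Fin 7) R)
    (h₀ : ∀ i ≠ 0, A i 0 = 0) (h₅ : ∀ i, i ≠ 0 → i ≠ 5 → A i 5 = 0)
    (h₄ : ∀ i, i ≠ 4 → i ≠ 5 → A i 4 = 0) (c : R) :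
    (c • 1 - A).det = (c - A 0 0) * (c - A 5 5) * (c - A 4 4) *
      (c • 1 - A.submatrix ![1, 2, 3, 6] ![1, 2, 3, 6]).det := by
  -- after deleting index 0, the old index 5 is `4 : Fin 6`; after deleting that, 4 is `3 : Fin 5`
  rw [det_smul_one_sub_eq_mul_of_col_eq_zero A 0 h₀,
    det_smul_one_sub_eq_mul_of_col_eq_zero _ 4
      fun i hi => h₅ _ (Fin.succAbove_ne _ _) (by revert i; decide),
    det_smul_one_sub_eq_mul_of_col_eq_zero _ 3
      fun i hi => h₄ _ (by revert i; decide) (by revert i; decide),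
    submatrix_submatrix, submatrix_submatrix]
  have hkept : (Fin.succAbove 0 ∘ Fin.succAbove 4) ∘ Fin.succAbove 3 = ![(1 : Fin 7), 2, 3, 6] := by
    decide
  rw [hkept]
  simp only [submatrix_apply, mul_assoc]
  rfl

end Matrix

theorem covid_jacobian_det_factorization_general
    (Pi b1 b2 nu th mu ga p eu en su sn sh au an mc : ℝ)
    (phiu phin phih : ℝ)
    (J : Matrix (Fin 7) (Fin 7) ℝ)
    (hJ : J = !![-mu, 0, -b1, -nu * b1, 0, th, -Pi * b2 / mu;
                 0, -(ga + mu), b1, nu * b1, 0, 0, Pi * b2 / mu;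
                 0, (1 - p) * ga, -phiu, 0, 0, 0, 0;
                 0, p * ga, 0, -phin, 0, 0, 0;
                 0, 0, eu, en, -phih, 0, 0;
                 0, 0, su, sn, sh, -(th + mu), 0;
                 0, 0, au, an, 0, 0, -mc])
    (M : Matrix (Fin 4) (Fin 4) ℝ)
    (hM : M = !![-(ga + mu), b1, nu * b1, Pi * b2 / mu;
                 (1 - p) * ga, -phiu, 0, 0;
                 p * ga, 0, -phin, 0;
                 0, au, an, -mc]) :
    (∀ lam : ℂ,
      (lam • (1 : Matrix (Fin 7) (Fin 7) ℂ) - J.map Complex.ofReal).det =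
        (lam + (mu : ℂ)) * (lam + ((th + mu : ℝ) : ℂ)) * (lam + (phih : ℂ)) *
          (lam • (1 : Matrix (Fin 4) (Fin 4) ℂ) - M.map Complex.ofReal).det) ∧
    ((-mu) • (1 : Matrix (Fin 7) (Fin 7) ℝ) - J).det = 0 ∧
    ((-(th + mu)) • (1 : Matrix (Fin 7) (Fin 7) ℝ) - J).det = 0 ∧
    ((-phih) • (1 : Matrix (Fin 7) (Fin 7) ℝ) - J).det = 0 := by
  have hS : ∀ i ≠ 0, J i 0 = 0 := by subst hJ; intro i; fin_cases i <;> simp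
  have hR : ∀ i, i ≠ 0 → i ≠ 5 → J i 5 = 0 := by subst hJ; intro i; fin_cases i <;> simp
  have hH : ∀ i, i ≠ 4 → i ≠ 5 → J i 4 = 0 := by subst hJ; intro i; fin_cases i <;> simp
  have hdiag : J 0 0 = -mu ∧ J 5 5 = -(th + mu) ∧ J 4 4 = -phih := by
    subst hJ; exact ⟨rfl, rfl, rfl⟩
  have hMJ : J.submatrix ![1, 2, 3, 6] ![1, 2, 3, 6] = M := by
    subst hJ hM
    ext i j
    fin_cases i <;> fin_cases j <;> rfl
  have factor : ∀ (K : Type) [CommRing K] [Algebra ℝ K] (lam : K),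
      (lam • 1 - J.map (algebraMap ℝ K)).det =
        (lam + algebraMap ℝ K mu) * (lam + algebraMap ℝ K (th + mu)) *
          (lam + algebraMap ℝ K phih) * (lam • 1 - M.map (algebraMap ℝ K)).det := by
    intro K _ _ lam
    rw [Matrix.det_smul_one_sub_fin_seven_of_cols_eq_zero _ (fun i hi => by simp [hS i hi])
      (fun i h₀ h₅ => by simp [hR i h₀ h₅]) (fun i h₄ h₅ => by simp [hH i h₄ h₅]),
      Matrix.submatrix_map, hMJ]
    simp only [Matrix.map_apply, hdiag, map_neg, sub_neg_eq_add]
  refine ⟨factor ℂ, ?_, ?_, ?_⟩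
  · simpa using factor ℝ (-mu)
  · simpa using factor ℝ (-(th + mu))
  · simpa using factor ℝ (-phih)

/-- factorization of the characteristic polynomial of the 7×7
Jacobian `J` at the disease-free equilibrium:
`det(λI₇ − J) = (λ+μ)(λ+θ+μ)(λ+φ_h) det(λI₄ − M)`; in particular `−μ`,
`−(θ+μ)` and `−φ_h` are eigenvalues of `J`. -/
theorem covid_jacobian_det_factorization
    (Pi b1 b2 nu th mu ga p eu en su sn sh dn dh au an mc : ℝ)
    (hPi : 0 < Pi) (hb1 : 0 < b1) (hb2 : 0 < b2) (hnu : 0 < nu) (hnu1 : nu < 1)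
    (hth : 0 < th) (hmu : 0 < mu) (hga : 0 < ga) (hp : 0 < p) (hp1 : p < 1)
    (heu : 0 < eu) (hen : 0 < en) (hsu : 0 < su) (hsn : 0 < sn) (hsh : 0 < sh)
    (hdn : 0 < dn) (hdh : 0 < dh) (hau : 0 < au) (han : 0 < an) (hmc : 0 < mc)
    (phiu phin phih : ℝ)
    (hphiu : phiu = eu + su + mu) (hphin : phin = en + sn + mu + dn)
    (hphih : phih = sh + mu + dh)
    (J : Matrix (Fin 7) (Fin 7) ℝ)
    (hJ : J = !![-mu, 0, -b1, -nu * b1, 0, th, -Pi * b2 / mu;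
                 0, -(ga + mu), b1, nu * b1, 0, 0, Pi * b2 / mu;
                 0, (1 - p) * ga, -phiu, 0, 0, 0, 0;
                 0, p * ga, 0, -phin, 0, 0, 0;
                 0, 0, eu, en, -phih, 0, 0;
                 0, 0, su, sn, sh, -(th + mu), 0;
                 0, 0, au, an, 0, 0, -mc])
    (M : Matrix (Fin 4) (Fin 4) ℝ)
    (hM : M = !![-(ga + mu), b1, nu * b1, Pi * b2 / mu;
                 (1 - p) * ga, -phiu, 0, 0;
                 p * ga, 0, -phin, 0;
                 0, au, an, -mc]) :
    (∀ lam : ℂ,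
      (lam • (1 : Matrix (Fin 7) (Fin 7) ℂ) - J.map Complex.ofReal).det =
        (lam + (mu : ℂ)) * (lam + ((th + mu : ℝ) : ℂ)) * (lam + (phih : ℂ)) *
          (lam • (1 : Matrix (Fin 4) (Fin 4) ℂ) - M.map Complex.ofReal).det) ∧
    ((-mu) • (1 : Matrix (Fin 7) (Fin 7) ℝ) - J).det = 0 ∧
    ((-(th + mu)) • (1 : Matrix (Fin 7) (Fin 7) ℝ) - J).det = 0 ∧
    ((-phih) • (1 : Matrix (Fin 7) (Fin 7) ℝ) - J).det = 0 :=
  covid_jacobian_det_factorization_general Pi b1 b2 nu th mu ga p eu en su sn sh au an mc phiu phin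
    phih J hJ M hM
end

section
/- Let all model parameters be positive and define A1 = (1−p)·γ/(η_u+σ_u+μ), A2 = p·γ/(η_n+σ_n+μ+δ_n), A3 = (η_u·A1 + η_n·A2)/(σ_h+μ+δ_h), A4 = (σ_u·A1 + σ_n·A2 + σ_h·A3)/(θ+μ), A5 = (α_u·A1 + α_n·A2)/μ_c, A6 = μ·β1·(A1 + ν·A2), A7 = δ_n·A2 + δ_h·A3, and ρ0 = −β2·A5·A7·(θ·A4 − (γ+μ)), ρ1 = (A6 + β2·A5·Π)·(θ·A4 − (γ+μ)) − β2·A5·A7·Π + μ·(γ+μ)·A7, ρ2 = (A6 + β2·A5·Π)·Π − μ·(γ+μ)·Π. Suppose (S*, E*, I_u*, I_n*, I_h*, R*, V*) ∈ ℝ⁷ is an endemic equilibrium of the COVID-19 model, i.e. all seven right-hand sides vanish at this point, with E* > 0 and N* = S*+E*+I_u*+I_n*+I_h*+R* > 0. Then I_u* = A1·E*, I_n* = A2·E*, I_h* = A3·E*, R* = A4·E*, V* = A5·E*, S* = (Π + (θ·A4 − (γ+μ))·E*)/μ, and E* is a root of the quadratic equation ρ0·E² + ρ1·E + ρ2 =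 0. -/
/-!
The equations for `I_u`, `I_n`, `I_h`, `R`, `V` form a triangular linear system in which `E*` is
the only source, so each of these compartments is a fixed multiple of `E*`. Adding the `S` and `E`
equations gives `μ S* = Π + θ R* − (γ + μ) E*`, and adding all six population equations gives
`μ N* = Π − A7 E*`. Finally the `E` equation, multiplied by `N*` and divided by `E* ≠ 0`, reads
`S* (β1 (A1 + ν A2) + β2 A5 N*) = (γ + μ) N*`; multiplied by `μ²` it only involves `μ S*` and
`μ N*`, both affine in `E*`, hence it is the quadratic `ρ0 E*² + ρ1 E* + ρ2 = 0`.
-/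

lemma eq_div_mul_of_mul_sub_mul_eq_zero {K : Type*} [Field K] {c d E X : K} (hd : d ≠ 0)
    (h : c * E - d * X = 0) : X = c / d * E := by
  field_simp
  linear_combination -h

lemma mul_force_eq_of_incidence_balance {K : Type*} [Field K]
    {b1 b2 nu c A1 A2 A5 S E Iu In V N : K} (hN : N ≠ 0) (hE : E ≠ 0)
    (hIu : Iu = A1 * E) (hIn : In = A2 * E) (hV : V = A5 * E)
    (h : b1 * S * (Iu + nu * In) / N + b2 * S * V - c * E = 0) :
    S * (b1 * (A1 + nu * A2) + b2 * A5 * N) = c * N := by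
  subst hIu hIn hV
  field_simp at h
  have hfactor : E * (S * (b1 * (A1 + nu * A2) + b2 * A5 * N) - c * N) = 0 := by
    linear_combination h
  exact sub_eq_zero.mp ((mul_eq_zero.mp hfactor).resolve_left hE)

lemma quadratic_of_affine_balance {K : Type*} [CommRing K] {Pi mu c k b2 A5 A6 A7 E x y : K}
    (hx : x = Pi + k * E) (hy : y = Pi - A7 * E) (h : x * (A6 + b2 * A5 * y) = mu * c * y) :
    -(b2 * A5 * A7 * k) * E ^ 2 + ((A6 + b2 * A5 * Pi) * k - b2 * A5 * A7 * Pi + mu * c * A7) * E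
      + ((A6 + b2 * A5 * Pi) * Pi - mu * c * Pi) = 0 := by
  subst hx hy
  linear_combination h

theorem covid_endemic_equilibrium_structure_general
    (Pi b1 b2 nu th mu ga p eu en su sn sh dn dh au an mc : ℝ)
    (hth : 0 < th) (hmu : 0 < mu)
    (heu : 0 < eu) (hen : 0 < en) (hsu : 0 < su) (hsn : 0 < sn) (hsh : 0 < sh)
    (hdn : 0 < dn) (hdh : 0 < dh) (hmc : 0 < mc)
    (A1 A2 A3 A4 A5 A6 A7 rho0 rho1 rho2 : ℝ)
    (hA1 : A1 = (1 - p) * ga / (eu + su + mu))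
    (hA2 : A2 = p * ga / (en + sn + mu + dn))
    (hA3 : A3 = (eu * A1 + en * A2) / (sh + mu + dh))
    (hA4 : A4 = (su * A1 + sn * A2 + sh * A3) / (th + mu))
    (hA5 : A5 = (au * A1 + an * A2) / mc)
    (hA6 : A6 = mu * b1 * (A1 + nu * A2))
    (hA7 : A7 = dn * A2 + dh * A3)
    (hrho0 : rho0 = -(b2 * A5 * A7 * (th * A4 - (ga + mu))))
    (hrho1 : rho1 = (A6 + b2 * A5 * Pi) * (th * A4 - (ga + mu))
      - b2 * A5 * A7 * Pi + mu * (ga + mu) * A7)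
    (hrho2 : rho2 = (A6 + b2 * A5 * Pi) * Pi - mu * (ga + mu) * Pi)
    (S E Iu In Ih R V : ℝ)
    (hE : 0 < E)
    (hNpos : 0 < S + E + Iu + In + Ih + R)
    (h1 : Pi - b1 * S * (Iu + nu * In) / (S + E + Iu + In + Ih + R) - b2 * S * V
      - mu * S + th * R = 0)
    (h2 : b1 * S * (Iu + nu * In) / (S + E + Iu + In + Ih + R) + b2 * S * V
      - (ga + mu) * E = 0)
    (h3 : (1 - p) * ga * E - (eu + su + mu) * Iu = 0)
    (h4 : p * ga * E - (en + sn + mu + dn) * In = 0)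
    (h5 : eu * Iu + en * In - (sh + mu + dh) * Ih = 0)
    (h6 : su * Iu + sn * In + sh * Ih - (th + mu) * R = 0)
    (h7 : au * Iu + an * In - mc * V = 0) :
    Iu = A1 * E ∧ In = A2 * E ∧ Ih = A3 * E ∧ R = A4 * E ∧ V = A5 * E ∧
      S = (Pi + (th * A4 - (ga + mu)) * E) / mu ∧
      rho0 * E ^ 2 + rho1 * E + rho2 = 0 := by
  have hIu : Iu = A1 * E := hA1 ▸ eq_div_mul_of_mul_sub_mul_eq_zero (by positivity) h3
  have hIn : In = A2 * E := hA2 ▸ eq_div_mul_of_mul_sub_mul_eq_zero (by positivity) h4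
  have hIh : Ih = A3 * E := hA3 ▸ eq_div_mul_of_mul_sub_mul_eq_zero (by positivity)
    (by linear_combination h5 - eu * hIu - en * hIn)
  have hR : R = A4 * E := hA4 ▸ eq_div_mul_of_mul_sub_mul_eq_zero (by positivity)
    (by linear_combination h6 - su * hIu - sn * hIn - sh * hIh)
  have hV : V = A5 * E := hA5 ▸ eq_div_mul_of_mul_sub_mul_eq_zero hmc.ne'
    (by linear_combination h7 - au * hIu - an * hIn)
  have hmS : mu * S = Pi + (th * A4 - (ga + mu)) * E := by
    linear_combination -h1 - h2 + th * hR
  have hmN : mu * (S + E + Iu + In + Ih + R) = Pi - A7 * E := by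
    linear_combination -h1 - h2 - h3 - h4 - h5 - h6 - dn * hIn - dh * hIh + E * hA7
  have hforce := mul_force_eq_of_incidence_balance hNpos.ne' hE.ne' hIu hIn hV h2
  refine ⟨hIu, hIn, hIh, hR, hV, ?_, ?_⟩
  · rw [eq_div_iff hmu.ne']
    linear_combination hmS
  · rw [hrho0, hrho1, hrho2]
    refine quadratic_of_affine_balance hmS hmN ?_
    rw [hA6]
    linear_combination mu ^ 2 * hforce

/-- every endemic equilibrium of the COVID-19 model has its
components proportional to `E*` via the constants `A1, …, A5`, has
`S* = (Π + (θA4 − (γ+μ))E*)/μ`, and `E*` solves the quadratic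
`ρ0 E² + ρ1 E + ρ2 = 0`. -/
theorem covid_endemic_equilibrium_structure
    (Pi b1 b2 nu th mu ga p eu en su sn sh dn dh au an mc : ℝ)
    (hPi : 0 < Pi) (hb1 : 0 < b1) (hb2 : 0 < b2) (hnu : 0 < nu) (hnu1 : nu < 1)
    (hth : 0 < th) (hmu : 0 < mu) (hga : 0 < ga) (hp : 0 < p) (hp1 : p < 1)
    (heu : 0 < eu) (hen : 0 < en) (hsu : 0 < su) (hsn : 0 < sn) (hsh : 0 < sh)
    (hdn : 0 < dn) (hdh : 0 < dh) (hau : 0 < au) (han : 0 < an) (hmc : 0 < mc)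
    (A1 A2 A3 A4 A5 A6 A7 rho0 rho1 rho2 : ℝ)
    (hA1 : A1 = (1 - p) * ga / (eu + su + mu))
    (hA2 : A2 = p * ga / (en + sn + mu + dn))
    (hA3 : A3 = (eu * A1 + en * A2) / (sh + mu + dh))
    (hA4 : A4 = (su * A1 + sn * A2 + sh * A3) / (th + mu))
    (hA5 : A5 = (au * A1 + an * A2) / mc)
    (hA6 : A6 = mu * b1 * (A1 + nu * A2))
    (hA7 : A7 = dn * A2 + dh * A3)
    (hrho0 : rho0 = -(b2 * A5 * A7 * (th * A4 - (ga + mu))))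
    (hrho1 : rho1 = (A6 + b2 * A5 * Pi) * (th * A4 - (ga + mu))
      - b2 * A5 * A7 * Pi + mu * (ga + mu) * A7)
    (hrho2 : rho2 = (A6 + b2 * A5 * Pi) * Pi - mu * (ga + mu) * Pi)
    (S E Iu In Ih R V : ℝ)
    (hE : 0 < E)
    (hNpos : 0 < S + E + Iu + In + Ih + R)
    (h1 : Pi - b1 * S * (Iu + nu * In) / (S + E + Iu + In + Ih + R) - b2 * S * V
      - mu * S + th * R = 0)
    (h2 : b1 * S * (Iu + nu * In) / (S + E + Iu + In + Ih + R) + b2 * S * V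
      - (ga + mu) * E = 0)
    (h3 : (1 - p) * ga * E - (eu + su + mu) * Iu = 0)
    (h4 : p * ga * E - (en + sn + mu + dn) * In = 0)
    (h5 : eu * Iu + en * In - (sh + mu + dh) * Ih = 0)
    (h6 : su * Iu + sn * In + sh * Ih - (th + mu) * R = 0)
    (h7 : au * Iu + an * In - mc * V = 0) :
    Iu = A1 * E ∧ In = A2 * E ∧ Ih = A3 * E ∧ R = A4 * E ∧ V = A5 * E ∧
      S = (Pi + (th * A4 - (ga + mu)) * E) / mu ∧
      rho0 * E ^ 2 + rho1 * E + rho2 = 0 :=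
  covid_endemic_equilibrium_structure_general Pi b1 b2 nu th mu ga p eu en su sn sh dn dh au an mc
    hth hmu heu hen hsu hsn hsh hdn hdh hmc A1 A2 A3 A4 A5 A6 A7 rho0 rho1 rho2 hA1 hA2 hA3 hA4 hA5
    hA6 hA7 hrho0 hrho1 hrho2 S E Iu In Ih R V hE hNpos h1 h2 h3 h4 h5 h6 h7
end

section
/- Let all model parameters be positive with β1 = β1* > 0 (the critical value at which ℛ₀ = 1), set φ_u = η_u+σ_u+μ, φ_n = η_n+σ_n+μ+δ_n, φ_h = σ_h+μ+δ_h, and let v2 > 0, w2 > 0. Define v3 = (β1* + β2·α_u·Π/(μ·μ_c))·v2/φ_u, v4 = (ν·β1* + β2·α_n·Π/(μ·μ_c))·v2/φ_n, v7 = (β2·Π/(μ·μ_c))·v2, and w3 = ((1−p)·γ/φ_u)·w2, w4 = (p·γ/φ_n)·w2, w5 = ((1−p)·γ·η_u/φ_u + p·γ·η_n/φ_n)·w2/φ_h, w6 = [((1−p)·γ/φ_u)·(σ_u + σ_h·η_u/φ_h) + (p·γ/φ_n)·(σ_n + σ_h·η_n/φ_h)]·w2/(θ+μ), w7 = ((1−p)·γ·α_u/φ_u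 + p·γ·α_n/φ_n)·w2/μ_c, w1 = (1/μ)·[(θ/(θ+μ))·{((1−p)·γ/φ_u)·(σ_u + σ_h·η_u/φ_h) + (p·γ/φ_n)·(σ_n + σ_h·η_n/φ_h)} − (γ+μ)]·w2. Define the bifurcation coefficients a = v2·[β2·w1·w7 − (β1*·μ/Π)·{w3·(w2 + 2·w3 + w4 + w5 + w6) + ν·w4·(w2 + w3 + 2·w4 + w5 + w6)}] and b = v2·(w3 + ν·w4). If w1 < 0, then a < 0 and b > 0; hence the model undergoes a forward bifurcation at β1 = β1*. -/
/-!
Positivity of the parameters makes every component `w₃, …, w₇` of the right eigenvector positive.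
In `a` the only term that can be positive is the one from the environmental force of infection,
`β₂ w₁ w₇`, and it is negative as soon as `w₁ < 0`; the rest of `a` is subtracted and is a sum of
products of positive quantities. The coefficient `b` is a positive combination of `w₃` and `w₄`.
-/

theorem bifurcation_coefficient_a_neg {Pi b1 b2 nu mu v2 w1 w2 w3 w4 w5 w6 w7 : ℝ}
    (hPi : 0 < Pi) (hb1 : 0 < b1) (hb2 : 0 < b2) (hnu : 0 < nu) (hmu : 0 < mu) (hv2 : 0 < v2)
    (hw1 : w1 < 0) (hw2 : 0 < w2) (hw3 : 0 < w3) (hw4 : 0 < w4) (hw5 : 0 ≤ w5) (hw6 : 0 ≤ w6)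
    (hw7 : 0 < w7) :
    v2 * (b2 * w1 * w7 - (b1 * mu / Pi) *
      (w3 * (w2 + 2 * w3 + w4 + w5 + w6) + nu * w4 * (w2 + w3 + 2 * w4 + w5 + w6))) < 0 := by
  have hlinear : b2 * w1 * w7 < 0 := mul_neg_of_neg_of_pos (mul_neg_of_pos_of_neg hb2 hw1) hw7
  have hquadratic : 0 < (b1 * mu / Pi) *
      (w3 * (w2 + 2 * w3 + w4 + w5 + w6) + nu * w4 * (w2 + w3 + 2 * w4 + w5 + w6)) := by
    positivity
  exact mul_neg_of_pos_of_neg hv2 (by linarith)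

theorem covid_forward_bifurcation_coefficients_general
    (Pi b2 nu th mu ga p eu en su sn sh dn dh au an mc : ℝ)
    (hPi : 0 < Pi) (hb2 : 0 < b2) (hnu : 0 < nu)
    (hth : 0 < th) (hmu : 0 < mu) (hga : 0 < ga) (hp : 0 < p) (hp1 : p < 1)
    (heu : 0 < eu) (hen : 0 < en) (hsu : 0 < su) (hsn : 0 < sn) (hsh : 0 < sh)
    (hdn : 0 < dn) (hdh : 0 < dh) (hau : 0 < au) (han : 0 < an) (hmc : 0 < mc)
    (phiu phin phih : ℝ)
    (hphiu : phiu = eu + su + mu) (hphin : phin = en + sn + mu + dn)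
    (hphih : phih = sh + mu + dh)
    (b1star : ℝ)
    (hb1starpos : 0 < b1star)
    (v2 w2 : ℝ) (hv2 : 0 < v2) (hw2 : 0 < w2)
    (w1 w3 w4 w5 w6 w7 a b : ℝ)
    (hw3 : w3 = ((1 - p) * ga / phiu) * w2)
    (hw4 : w4 = (p * ga / phin) * w2)
    (hw5 : w5 = ((1 - p) * ga * eu / phiu + p * ga * en / phin) * w2 / phih)
    (hw6 : w6 = (((1 - p) * ga / phiu) * (su + sh * eu / phih)
      + (p * ga / phin) * (sn + sh * en / phih)) * w2 / (th + mu))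
    (hw7 : w7 = ((1 - p) * ga * au / phiu + p * ga * an / phin) * w2 / mc)
    (ha : a = v2 * (b2 * w1 * w7 - (b1star * mu / Pi) *
      (w3 * (w2 + 2 * w3 + w4 + w5 + w6) + nu * w4 * (w2 + w3 + 2 * w4 + w5 + w6))))
    (hb : b = v2 * (w3 + nu * w4))
    (hw1neg : w1 < 0) :
    a < 0 ∧ b > 0 := by
  have hq : 0 < 1 - p := sub_pos.2 hp1
  have hphiu' : 0 < phiu := by rw [hphiu]; positivity
  have hphin' : 0 < phin := by rw [hphin]; positivity
  have hphih' : 0 < phih := by rw [hphih]; positivity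
  have hw3' : 0 < w3 := by rw [hw3]; positivity
  have hw4' : 0 < w4 := by rw [hw4]; positivity
  have hw5' : 0 ≤ w5 := by rw [hw5]; positivity
  have hw6' : 0 ≤ w6 := by rw [hw6]; positivity
  have hw7' : 0 < w7 := by rw [hw7]; positivity
  constructor
  · rw [ha]
    exact bifurcation_coefficient_a_neg hPi hb1starpos hb2 hnu hmu hv2 hw1neg hw2 hw3' hw4' hw5'
      hw6' hw7'
  · rw [hb]
    positivity

/-- at the critical transmission rate `β1 = β1*` (where
`ℛ₀ = 1`), the Castillo-Chavez–Song bifurcation coefficients satisfy `a < 0`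
and `b > 0` (given `w1 < 0`); hence the model undergoes a forward
bifurcation at `β1 = β1*`. -/
theorem covid_forward_bifurcation_coefficients
    (Pi b2 nu th mu ga p eu en su sn sh dn dh au an mc : ℝ)
    (hPi : 0 < Pi) (hb2 : 0 < b2) (hnu : 0 < nu) (hnu1 : nu < 1)
    (hth : 0 < th) (hmu : 0 < mu) (hga : 0 < ga) (hp : 0 < p) (hp1 : p < 1)
    (heu : 0 < eu) (hen : 0 < en) (hsu : 0 < su) (hsn : 0 < sn) (hsh : 0 < sh)
    (hdn : 0 < dn) (hdh : 0 < dh) (hau : 0 < au) (han : 0 < an) (hmc : 0 < mc)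
    (phiu phin phih : ℝ)
    (hphiu : phiu = eu + su + mu) (hphin : phin = en + sn + mu + dn)
    (hphih : phih = sh + mu + dh)
    (b1star : ℝ)
    (hb1star : b1star = (mc * (ga + mu) * phiu * phin
        - ga * b2 * (Pi / mu) * ((1 - p) * au * phin + p * an * phiu))
      / (mc * ga * ((1 - p) * phin + nu * p * phiu)))
    (hb1starpos : 0 < b1star)
    (v2 w2 : ℝ) (hv2 : 0 < v2) (hw2 : 0 < w2)
    (v3 v4 v7 w1 w3 w4 w5 w6 w7 a b : ℝ)
    (hv3 : v3 = (b1star + b2 * au * Pi / (mu * mc)) * v2 / phiu)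
    (hv4 : v4 = (nu * b1star + b2 * an * Pi / (mu * mc)) * v2 / phin)
    (hv7 : v7 = (b2 * Pi / (mu * mc)) * v2)
    (hw3 : w3 = ((1 - p) * ga / phiu) * w2)
    (hw4 : w4 = (p * ga / phin) * w2)
    (hw5 : w5 = ((1 - p) * ga * eu / phiu + p * ga * en / phin) * w2 / phih)
    (hw6 : w6 = (((1 - p) * ga / phiu) * (su + sh * eu / phih)
      + (p * ga / phin) * (sn + sh * en / phih)) * w2 / (th + mu))
    (hw7 : w7 = ((1 - p) * ga * au / phiu + p * ga * an / phin) * w2 / mc)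
    (hw1 : w1 = (1 / mu) * ((th / (th + mu)) *
      (((1 - p) * ga / phiu) * (su + sh * eu / phih)
        + (p * ga / phin) * (sn + sh * en / phih)) - (ga + mu)) * w2)
    (ha : a = v2 * (b2 * w1 * w7 - (b1star * mu / Pi) *
      (w3 * (w2 + 2 * w3 + w4 + w5 + w6) + nu * w4 * (w2 + w3 + 2 * w4 + w5 + w6))))
    (hb : b = v2 * (w3 + nu * w4))
    (hw1neg : w1 < 0) :
    a < 0 ∧ b > 0 :=
  covid_forward_bifurcation_coefficients_general Pi b2 nu th mu ga p eu en su sn sh dn dh au an mc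
    hPi hb2 hnu hth hmu hga hp hp1 heu hen hsu hsn hsh hdn hdh hau han hmc phiu phin phih hphiu
    hphin hphih b1star hb1starpos v2 w2 hv2 hw2 w1 w3 w4 w5 w6 w7 a b hw3 hw4 hw5 hw6 hw7 ha hb
    hw1neg
end
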